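/- arXiv:1005.3871 — 6 statements merged into one kernel-verified Lean document; each statement's English description precedes it below -/
import Mathlib

section
/- For every integer b ≥ 2 there exists a constant K > 0 (depending only on b) such that for all real t ≥ 1, the sum ∑ 1/(ℓ·ord_ℓ(b)), taken over all primes ℓ with ℓ ≥ t and ℓ ∤ b, is at most K·t^{−1/2}. -/
/-!
Group the primes `ℓ` by `k = ord_ℓ(b)`. The primes of order `k` divide `b ^ k - 1`, so at most
`k log b / log t` of them exceed `t`; and since `k ∣ ℓ - 1`, they are of the form `k m + 1` with
distinct `m ≥ 1`. For `k ≤ √t log t` the first fact bounds the fibre by `log b / (t log t)`; for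
larger `k` the second bounds it by `O((1 + log k) / k ^ 2)`, whose tail beyond `√t log t` is
`O(t ^ (-1/2))`.
-/

open Finset Real

lemma sum_inv_le_two_add_log_card {M : Finset ℕ} (hM : 0 ∉ M) :
    ∑ m ∈ M, (m : ℝ)⁻¹ ≤ 2 + log #M := by
  set n := #M
  have h_small : ∑ m ∈ M with m ≤ n, (m : ℝ)⁻¹ ≤ 1 + log n :=
    calc ∑ m ∈ M with m ≤ n, (m : ℝ)⁻¹
        ≤ ∑ m ∈ Icc 1 n, (m : ℝ)⁻¹ := by
          refine sum_le_sum_of_subset_of_nonneg (fun m hm ↦ ?_) (fun _ _ _ ↦ by positivity)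
          rw [mem_filter] at hm
          exact mem_Icc.mpr ⟨Nat.one_le_iff_ne_zero.mpr (ne_of_mem_of_not_mem hm.1 hM), hm.2⟩
      _ = harmonic n := by simp [harmonic_eq_sum_Icc]
      _ ≤ 1 + log n := harmonic_le_one_add_log n
  have h_large : ∑ m ∈ M with ¬m ≤ n, (m : ℝ)⁻¹ ≤ 1 :=
    calc ∑ m ∈ M with ¬m ≤ n, (m : ℝ)⁻¹
        ≤ ∑ m ∈ M with ¬m ≤ n, (n : ℝ)⁻¹ := by
          refine sum_le_sum fun m hm ↦ ?_
          rw [mem_filter, not_le] at hm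
          have hn : 0 < n := card_pos.mpr ⟨m, hm.1⟩
          gcongr
          exact hm.2.le
      _ ≤ n * (n : ℝ)⁻¹ := by
          rw [sum_const, nsmul_eq_mul]
          gcongr
          exact card_filter_le M _
      _ ≤ 1 := mul_inv_le_one
  rw [← sum_filter_add_sum_filter_not M (· ≤ n)]
  linarith

lemma sum_le_of_le_sub_succ {f F : ℕ → ℝ} {m : ℕ} (hf : ∀ k, m ≤ k → 0 ≤ f k)
    (hF : ∀ k, 0 ≤ F k) (hfF : ∀ k, m ≤ k → f k ≤ F k - F (k + 1))
    {s : Finset ℕ} (hs : ∀ k ∈ s, m ≤ k) : ∑ k ∈ s, f k ≤ F m := by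
  obtain ⟨N, hN⟩ := s.bddAbove
  have hsub : s ⊆ Ico m (m + N + 1) := fun k hk ↦
    mem_Ico.mpr ⟨hs k hk, by have := hN hk; omega⟩
  calc ∑ k ∈ s, f k
      ≤ ∑ k ∈ Ico m (m + N + 1), f k :=
        sum_le_sum_of_subset_of_nonneg hsub fun k hk _ ↦ hf k (mem_Ico.mp hk).1
    _ ≤ ∑ k ∈ Ico m (m + N + 1), (F k - F (k + 1)) :=
        sum_le_sum fun k hk ↦ hfF k (mem_Ico.mp hk).1
    _ = F m - F (m + N + 1) := by
        simpa only [neg_sub_neg] using sum_Ico_sub (fun k ↦ -F k) (by omega : m ≤ m + N + 1)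
    _ ≤ F m := sub_le_self _ (hF _)

lemma add_log_div_sq_le {a x : ℝ} (ha : 0 ≤ a) (hx : 1 ≤ x) :
    (a + log x) / x ^ 2 ≤ 2 * (a + 1 + log x) / x - 2 * (a + 1 + log (x + 1)) / (x + 1) := by
  have hx0 : 0 < x := by linarith
  have hlog : 0 ≤ log x := log_nonneg hx
  have hlog_succ : log (x + 1) ≤ log x + x⁻¹ := by
    have h := log_le_sub_one_of_pos (show 0 < (x + 1) / x by positivity)
    have hx_inv : (x + 1) / x - 1 = x⁻¹ := by field_simp; ring
    rw [log_div (by positivity) hx0.ne', hx_inv] at h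
    linarith
  have hdiff : 2 * (a + 1 + log x) / x - 2 * (a + 1 + (log x + x⁻¹)) / (x + 1) - (a + log x) / x ^ 2
      = (a + log x) * (x - 1) / (x ^ 2 * (x + 1)) := by
    field_simp
    ring
  have hdiff_nonneg : 0 ≤ (a + log x) * (x - 1) / (x ^ 2 * (x + 1)) := by
    apply div_nonneg (mul_nonneg (by linarith) (by linarith)) (by positivity)
  have : 2 * (a + 1 + log (x + 1)) / (x + 1) ≤ 2 * (a + 1 + (log x + x⁻¹)) / (x + 1) := by
    gcongr
  linarith

lemma sum_add_log_div_sq_le {a y : ℝ} (ha : 0 ≤ a) (hy : 1 ≤ y) {s : Finset ℕ}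
    (hs : ∀ k ∈ s, y < k) :
    ∑ k ∈ s, (a + log k) / (k : ℝ) ^ 2 ≤ 2 * (a + 1 + log (2 * y)) / y := by
  set m := ⌊y⌋₊ + 1
  have hym : y ≤ m := by
    push_cast [m]
    exact (Nat.lt_floor_add_one y).le
  have hm2y : (m : ℝ) ≤ 2 * y := by
    have := Nat.floor_le (zero_le_one.trans hy)
    push_cast [m]
    linarith
  have hm : 1 ≤ (m : ℝ) := hy.trans hym
  calc ∑ k ∈ s, (a + log k) / (k : ℝ) ^ 2
      ≤ 2 * (a + 1 + log m) / m := by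
        refine sum_le_of_le_sub_succ (F := fun k : ℕ ↦ 2 * (a + 1 + log k) / k)
          (fun k _ ↦ by have := log_natCast_nonneg k; positivity)
          (fun k ↦ by have := log_natCast_nonneg k; positivity)
          (fun k hk ↦ ?_) fun k hk ↦ (Nat.floor_lt (by linarith)).mpr (hs k hk)
        push_cast
        exact add_log_div_sq_le ha (hm.trans (by exact_mod_cast hk))
    _ ≤ 2 * (a + 1 + log (2 * y)) / y := by
        have := log_nonneg (show (1 : ℝ) ≤ 2 * y by linarith)
        gcongr

lemma orderOf_natCast_dvd_sub_one {b ℓ : ℕ} (hℓ : ℓ.Prime) (hb : ¬ℓ ∣ b) :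
    orderOf (b : ZMod ℓ) ∣ ℓ - 1 :=
  have := Fact.mk hℓ
  ZMod.orderOf_dvd_card_sub_one (by rwa [Ne, ZMod.natCast_eq_zero_iff])

lemma orderOf_natCast_pos {b ℓ : ℕ} (hℓ : ℓ.Prime) (hb : ¬ℓ ∣ b) :
    0 < orderOf (b : ZMod ℓ) :=
  Nat.pos_of_dvd_of_pos (orderOf_natCast_dvd_sub_one hℓ hb) (by have := hℓ.two_le; omega)

lemma one_le_logb_two {b : ℕ} (hb : 2 ≤ b) : 1 ≤ logb 2 b :=
  (le_logb_iff_rpow_le one_lt_two (by positivity)).mpr (by norm_num; exact_mod_cast hb)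

lemma prod_le_pow_of_pow_eq_one {b k : ℕ} (hb : 2 ≤ b) (hk : k ≠ 0) {G : Finset ℕ}
    (hG : ∀ ℓ ∈ G, ℓ.Prime ∧ (b : ZMod ℓ) ^ k = 1) : ∏ ℓ ∈ G, ℓ ≤ b ^ k := by
  have h_dvd : ∏ ℓ ∈ G, ℓ ∣ b ^ k - 1 := by
    refine prod_primes_dvd _ (fun ℓ hℓ ↦ (hG ℓ hℓ).1.prime) fun ℓ hℓ ↦ ?_
    rw [← ZMod.natCast_eq_zero_iff, Nat.cast_sub (Nat.one_le_pow _ _ (by omega))]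
    push_cast
    rw [(hG ℓ hℓ).2, sub_self]
  have : 2 ≤ b ^ k := hb.trans (Nat.le_self_pow hk b)
  exact (Nat.le_of_dvd (by omega) h_dvd).trans (Nat.sub_le _ _)

lemma card_mul_log_le {b k : ℕ} (hb : 2 ≤ b) (hk : k ≠ 0) {G : Finset ℕ}
    (hG : ∀ ℓ ∈ G, ℓ.Prime ∧ (b : ZMod ℓ) ^ k = 1) {r : ℝ} (hr : 0 < r)
    (hrG : ∀ ℓ ∈ G, r ≤ ℓ) : #G * log r ≤ k * log b := by
  rw [← log_pow, ← log_pow]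
  refine log_le_log (by positivity) ?_
  calc r ^ #G = ∏ _ ∈ G, r := (prod_const r).symm
    _ ≤ ∏ ℓ ∈ G, (ℓ : ℝ) := prod_le_prod (fun _ _ ↦ hr.le) hrG
    _ = ((∏ ℓ ∈ G, ℓ : ℕ) : ℝ) := by push_cast; rfl
    _ ≤ (b : ℝ) ^ k := by exact_mod_cast prod_le_pow_of_pow_eq_one hb hk hG

lemma sum_one_div_mul_le_log_div_mul_log {b k : ℕ} (hb : 2 ≤ b) (hk : k ≠ 0) {G : Finset ℕ}
    (hG : ∀ ℓ ∈ G, ℓ.Prime ∧ (b : ZMod ℓ) ^ k = 1) {t : ℝ} (ht : 1 < t)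
    (htG : ∀ ℓ ∈ G, t ≤ ℓ) : ∑ ℓ ∈ G, 1 / ((ℓ : ℝ) * k) ≤ log b / (t * log t) := by
  have hk' : (0 : ℝ) < k := by positivity
  have hlogt : 0 < log t := log_pos ht
  have hcard := card_mul_log_le hb hk hG (by linarith) htG
  calc ∑ ℓ ∈ G, 1 / ((ℓ : ℝ) * k)
      ≤ ∑ ℓ ∈ G, 1 / (t * k) := sum_le_sum fun ℓ hℓ ↦ by
        have := htG ℓ hℓ
        gcongr
    _ = #G / (t * k) := by rw [sum_const, nsmul_eq_mul, mul_one_div]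
    _ ≤ log b / (t * log t) := by
        rw [div_le_div_iff₀ (by positivity) (by positivity)]
        nlinarith

lemma sum_one_div_mul_le_add_log_div_sq {b k : ℕ} (hb : 2 ≤ b) (hk : k ≠ 0) {G : Finset ℕ}
    (hG : ∀ ℓ ∈ G, ℓ.Prime ∧ ¬ℓ ∣ b ∧ orderOf (b : ZMod ℓ) = k) :
    ∑ ℓ ∈ G, 1 / ((ℓ : ℝ) * k) ≤ (log (logb 2 b) + 2 + log k) / k ^ 2 := by
  have hk' : (0 : ℝ) < k := by positivity
  have hlogb := one_le_logb_two hb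
  -- `ℓ ≡ 1 (mod k)`, so distinct `ℓ ∈ G` have distinct quotients `(ℓ - 1) / k ≥ 1`.
  set q : ℕ → ℕ := fun ℓ ↦ (ℓ - 1) / k
  have hq : ∀ ℓ ∈ G, k * q ℓ = ℓ - 1 := fun ℓ hℓ ↦ by
    have := orderOf_natCast_dvd_sub_one (hG ℓ hℓ).1 (hG ℓ hℓ).2.1
    rw [(hG ℓ hℓ).2.2] at this
    exact Nat.mul_div_cancel' this
  have hq_pos : ∀ ℓ ∈ G, 0 < q ℓ := fun ℓ hℓ ↦ Nat.pos_of_ne_zero fun h ↦ by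
    have h1 := hq ℓ hℓ
    have := (hG ℓ hℓ).1.two_le
    rw [h, mul_zero] at h1
    omega
  have hq_inj : Set.InjOn q G := fun x hx y hy hxy ↦ by
    have := hq x hx; have := hq y hy; have := (hG x hx).1.two_le; have := (hG y hy).1.two_le
    rw [hxy] at *
    omega
  have hcard : log #G ≤ log (logb 2 b) + log k := by
    rcases G.eq_empty_or_nonempty with rfl | hne
    · simp only [card_empty, Nat.cast_zero, log_zero]
      have := log_nonneg hlogb
      have := log_natCast_nonneg k
      linarith
    have h := card_mul_log_le hb hk (fun ℓ hℓ ↦ ⟨(hG ℓ hℓ).1, (hG ℓ hℓ).2.2 ▸ pow_orderOf_eq_one _⟩)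
      two_pos fun ℓ hℓ ↦ by exact_mod_cast (hG ℓ hℓ).1.two_le
    rw [← log_mul (by positivity) hk'.ne']
    refine log_le_log (by simpa using hne) ?_
    rw [logb, div_mul_eq_mul_div, le_div_iff₀ (log_pos one_lt_two)]
    linarith
  calc ∑ ℓ ∈ G, 1 / ((ℓ : ℝ) * k)
      ≤ ∑ ℓ ∈ G, (k : ℝ)⁻¹ ^ 2 * (q ℓ : ℝ)⁻¹ := sum_le_sum fun ℓ hℓ ↦ by
        have : (k : ℝ) * q ℓ ≤ ℓ := by
          have := hq ℓ hℓ
          exact_mod_cast (by omega : k * q ℓ ≤ ℓ)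
        have : (0 : ℝ) < q ℓ := by exact_mod_cast hq_pos ℓ hℓ
        rw [inv_pow, ← mul_inv, one_div]
        exact inv_anti₀ (by positivity) (by nlinarith)
    _ = (k : ℝ)⁻¹ ^ 2 * ∑ m ∈ G.image q, (m : ℝ)⁻¹ := by rw [sum_image hq_inj, mul_sum]
    _ ≤ (k : ℝ)⁻¹ ^ 2 * (2 + log #G) := by
        gcongr
        simpa [card_image_of_injOn hq_inj] using
          sum_inv_le_two_add_log_card (M := G.image q) fun h ↦ by
            obtain ⟨ℓ, hℓ, h0⟩ := mem_image.mp h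
            exact (hq_pos ℓ hℓ).ne' h0
    _ ≤ (log (logb 2 b) + 2 + log k) / k ^ 2 := by
        rw [inv_pow, inv_mul_eq_div]
        gcongr ?_ / _
        linarith

lemma card_filter_natCast_le_le {S : Finset ℕ} (hS : 0 ∉ S) {y : ℝ} (hy : 0 ≤ y) :
    (#{k ∈ S | ((k : ℕ) : ℝ) ≤ y} : ℝ) ≤ y := by
  have hsub : {k ∈ S | ((k : ℕ) : ℝ) ≤ y} ⊆ Icc 1 ⌊y⌋₊ := fun k hk ↦ by
    rw [mem_filter] at hk
    exact mem_Icc.mpr ⟨Nat.one_le_iff_ne_zero.mpr (ne_of_mem_of_not_mem hk.1 hS),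
      Nat.le_floor hk.2⟩
  calc (#{k ∈ S | ((k : ℕ) : ℝ) ≤ y} : ℝ) ≤ #(Icc 1 ⌊y⌋₊) := by exact_mod_cast card_le_card hsub
    _ = ⌊y⌋₊ := by simp
    _ ≤ y := Nat.floor_le hy

lemma two_mul_add_log_div_sqrt_mul_log_le {c t : ℝ} (hc : 0 ≤ c) (ht : exp 1 ≤ t) :
    2 * (c + log (2 * (√t * log t))) / (√t * log t) ≤ (2 * (c + log 2) + 3) / √t := by
  have ht0 : 0 < t := (exp_pos 1).trans_le ht
  have hlogt : 1 ≤ log t := by rwa [le_log_iff_exp_le ht0]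
  have hsqrt : 0 < √t := sqrt_pos.mpr ht0
  have hlog2 := log_pos one_lt_two
  have hlog_mul : log (2 * (√t * log t)) ≤ log 2 + 3 / 2 * log t := by
    rw [log_mul two_ne_zero (by positivity), log_mul (by positivity) (by positivity),
      log_sqrt ht0.le]
    linarith [log_le_sub_one_of_pos (show 0 < log t by linarith)]
  calc 2 * (c + log (2 * (√t * log t))) / (√t * log t)
      ≤ 2 * (c + (log 2 + 3 / 2 * log t)) / (√t * log t) := by gcongr
    _ = 2 * (c + log 2) / (√t * log t) + 3 / √t := by field_simp; ring
    _ ≤ 2 * (c + log 2) / √t + 3 / √t := by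
        gcongr
        exact le_mul_of_one_le_right hsqrt.le hlogt
    _ = (2 * (c + log 2) + 3) / √t := by ring

lemma sum_one_div_mul_orderOf_le {b : ℕ} (hb : 2 ≤ b) {t : ℝ} (ht : exp 1 ≤ t)
    {F : Finset ℕ} (hF : ∀ ℓ ∈ F, ℓ.Prime ∧ ¬ℓ ∣ b ∧ t ≤ ℓ) :
    ∑ ℓ ∈ F, 1 / ((ℓ : ℝ) * orderOf (b : ZMod ℓ)) ≤
      (log b + 2 * (log (logb 2 b) + 3 + log 2) + 3) / √t := by
  classical
  have ht0 : 0 < t := (exp_pos 1).trans_le ht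
  have hlogt : 1 ≤ log t := by rwa [le_log_iff_exp_le ht0]
  have ht1 : 1 < t := by linarith [add_one_le_exp (1 : ℝ)]
  have hlogb : 0 ≤ log (logb 2 b) := log_nonneg (one_le_logb_two hb)
  set ord : ℕ → ℕ := fun ℓ ↦ orderOf (b : ZMod ℓ)
  set S := F.image ord
  set y := √t * log t
  have hy : 1 ≤ y := one_le_mul_of_one_le_of_one_le (one_le_sqrt.mpr ht1.le) hlogt
  have hS : 0 ∉ S := fun h ↦ by
    obtain ⟨ℓ, hℓ, h0⟩ := mem_image.mp h
    exact (orderOf_natCast_pos (hF ℓ hℓ).1 (hF ℓ hℓ).2.1).ne' h0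
  have hfiber : ∀ k, ∀ ℓ ∈ {ℓ ∈ F | ord ℓ = k}, ℓ.Prime ∧ ¬ℓ ∣ b ∧ ord ℓ = k ∧ t ≤ ℓ :=
    fun k ℓ hℓ ↦ by
      rw [mem_filter] at hℓ
      exact ⟨(hF ℓ hℓ.1).1, (hF ℓ hℓ.1).2.1, hℓ.2, (hF ℓ hℓ.1).2.2⟩
  set φ : ℕ → ℝ := fun k ↦ ∑ ℓ ∈ {ℓ ∈ F | ord ℓ = k}, 1 / ((ℓ : ℝ) * k)
  have hsum : ∑ ℓ ∈ F, 1 / ((ℓ : ℝ) * ord ℓ) = ∑ k ∈ S, φ k := by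
    rw [← sum_fiberwise_of_maps_to fun ℓ hℓ ↦ mem_image_of_mem ord hℓ]
    exact sum_congr rfl fun k _ ↦ sum_congr rfl fun ℓ hℓ ↦ by rw [(mem_filter.mp hℓ).2]
  have h_small : ∑ k ∈ S with ((k : ℕ) : ℝ) ≤ y, φ k ≤ log b / √t :=
    calc ∑ k ∈ S with ((k : ℕ) : ℝ) ≤ y, φ k
        ≤ ∑ k ∈ S with ((k : ℕ) : ℝ) ≤ y, log b / (t * log t) := sum_le_sum fun k hk ↦
          sum_one_div_mul_le_log_div_mul_log hb (ne_of_mem_of_not_mem (mem_filter.mp hk).1 hS)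
            (fun ℓ hℓ ↦ ⟨(hfiber k ℓ hℓ).1, (hfiber k ℓ hℓ).2.2.1 ▸ pow_orderOf_eq_one _⟩)
            ht1 fun ℓ hℓ ↦ (hfiber k ℓ hℓ).2.2.2
      _ ≤ y * (log b / (t * log t)) := by
          rw [sum_const, nsmul_eq_mul]
          gcongr
          exact card_filter_natCast_le_le hS (by linarith)
      _ = log b / √t := by
          simp only [y]
          field_simp
          rw [sq_sqrt ht0.le]
          ring
  have h_large :
      ∑ k ∈ S with ¬((k : ℕ) : ℝ) ≤ y, φ k ≤ (2 * (log (logb 2 b) + 3 + log 2) + 3) / √t :=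
    calc ∑ k ∈ S with ¬((k : ℕ) : ℝ) ≤ y, φ k
        ≤ ∑ k ∈ S with ¬((k : ℕ) : ℝ) ≤ y, (log (logb 2 b) + 2 + log k) / (k : ℝ) ^ 2 :=
          sum_le_sum fun k hk ↦ sum_one_div_mul_le_add_log_div_sq hb
            (ne_of_mem_of_not_mem (mem_filter.mp hk).1 hS)
            fun ℓ hℓ ↦ ⟨(hfiber k ℓ hℓ).1, (hfiber k ℓ hℓ).2.1, (hfiber k ℓ hℓ).2.2.1⟩
      _ ≤ 2 * (log (logb 2 b) + 2 + 1 + log (2 * y)) / y :=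
          sum_add_log_div_sq_le (by positivity) hy fun k hk ↦ not_le.mp (mem_filter.mp hk).2
      _ ≤ (2 * (log (logb 2 b) + 2 + 1 + log 2) + 3) / √t :=
          two_mul_add_log_div_sqrt_mul_log_le (by positivity) ht
      _ = (2 * (log (logb 2 b) + 3 + log 2) + 3) / √t := by ring
  rw [hsum, ← sum_filter_add_sum_filter_not S fun k ↦ (k : ℝ) ≤ y]
  calc _ ≤ log b / √t + (2 * (log (logb 2 b) + 3 + log 2) + 3) / √t := add_le_add h_small h_large
    _ = _ := by ring

lemma exists_forall_sum_one_div_mul_orderOf_le {b : ℕ} (hb : 2 ≤ b) :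
    ∃ K : ℝ, 0 < K ∧ ∀ t : ℝ, 1 ≤ t → ∀ F : Finset ℕ, (∀ ℓ ∈ F, ℓ.Prime ∧ ¬ℓ ∣ b ∧ t ≤ ℓ) →
      ∑ ℓ ∈ F, 1 / ((ℓ : ℝ) * orderOf (b : ZMod ℓ)) ≤ K / √t := by
  classical
  set K₀ := log b + 2 * (log (logb 2 b) + 3 + log 2) + 3
  have hK₀ : 0 ≤ K₀ := by
    have := log_nonneg (one_le_logb_two hb)
    have := log_natCast_nonneg b
    positivity
  refine ⟨2 * (K₀ + 1), by positivity, fun t ht F hF ↦ ?_⟩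
  have hsqrt : 0 < √t := sqrt_pos.mpr (by linarith)
  rcases le_or_gt (exp 1) t with hte | hte
  · calc _ ≤ K₀ / √t := sum_one_div_mul_orderOf_le hb hte hF
      _ ≤ 2 * (K₀ + 1) / √t := by gcongr; linarith
  -- Below `exp 1` there is only the prime `2`, whose term is at most `1`.
  have h_below : ∑ ℓ ∈ F with ¬exp 1 ≤ ((ℓ : ℕ) : ℝ), 1 / ((ℓ : ℝ) * orderOf (b : ZMod ℓ)) ≤ 1 := by
    have hsub : {ℓ ∈ F | ¬exp 1 ≤ ((ℓ : ℕ) : ℝ)} ⊆ {2} := fun ℓ hℓ ↦ by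
      rw [mem_filter, not_le] at hℓ
      have h3 : (ℓ : ℝ) < 3 := hℓ.2.trans (exp_one_lt_d9.trans (by norm_num))
      have := (hF ℓ hℓ.1).1.two_le
      have : ℓ < 3 := by exact_mod_cast h3
      rw [mem_singleton]
      omega
    calc _ ≤ ∑ ℓ ∈ F with ¬exp 1 ≤ ((ℓ : ℕ) : ℝ), (1 : ℝ) := sum_le_sum fun ℓ hℓ ↦ by
          have hℓ := (mem_filter.mp hℓ).1
          have : (1 : ℝ) ≤ ℓ := by exact_mod_cast (hF ℓ hℓ).1.one_le
          have : (1 : ℝ) ≤ orderOf (b : ZMod ℓ) := by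
            exact_mod_cast orderOf_natCast_pos (hF ℓ hℓ).1 (hF ℓ hℓ).2.1
          rw [div_le_one (by positivity)]
          nlinarith
      _ ≤ 1 := by simpa using card_le_card hsub
  have h_above : ∑ ℓ ∈ F with exp 1 ≤ ((ℓ : ℕ) : ℝ), 1 / ((ℓ : ℝ) * orderOf (b : ZMod ℓ)) ≤ K₀ :=
    calc _ ≤ K₀ / √(exp 1) := sum_one_div_mul_orderOf_le hb le_rfl fun ℓ hℓ ↦
          ⟨(hF _ (mem_filter.mp hℓ).1).1, (hF _ (mem_filter.mp hℓ).1).2.1, (mem_filter.mp hℓ).2⟩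
      _ ≤ K₀ := div_le_self hK₀ (one_le_sqrt.mpr (by linarith [add_one_le_exp (1 : ℝ)]))
  have hsqrt_le : √t ≤ 2 := sqrt_le_iff.mpr ⟨by norm_num, by linarith [exp_one_lt_d9]⟩
  rw [← sum_filter_add_sum_filter_not F fun ℓ ↦ exp 1 ≤ ((ℓ : ℕ) : ℝ)]
  calc _ ≤ K₀ + 1 := add_le_add h_above h_below
    _ ≤ 2 * (K₀ + 1) / √t := by rw [le_div_iff₀ hsqrt]; nlinarith

/-- For every integer `b ≥ 2` there exists `K > 0` (depending only on `b`) such that for all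
real `t ≥ 1`, the sum `∑ 1/(ℓ·ord_ℓ(b))` over primes `ℓ ≥ t` with `ℓ ∤ b` is at most
`K · t^(-1/2)`. Here `ord_ℓ(b)` is the multiplicative order of `b` modulo `ℓ`. -/
theorem stmt0 (b : ℕ) (hb : 2 ≤ b) :
    ∃ K : ℝ, 0 < K ∧ ∀ t : ℝ, 1 ≤ t →
      Summable (fun ℓ : {ℓ : ℕ // ℓ.Prime ∧ ¬ℓ ∣ b ∧ t ≤ (ℓ : ℝ)} =>
        (1 : ℝ) / (((ℓ : ℕ) : ℝ) * (orderOf ((b : ZMod (ℓ : ℕ))) : ℝ))) ∧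
      ∑' ℓ : {ℓ : ℕ // ℓ.Prime ∧ ¬ℓ ∣ b ∧ t ≤ (ℓ : ℝ)},
        (1 : ℝ) / (((ℓ : ℕ) : ℝ) * (orderOf ((b : ZMod (ℓ : ℕ))) : ℝ))
      ≤ K * t ^ (-(1 / 2 : ℝ)) := by
  obtain ⟨K, hK, hbound⟩ := exists_forall_sum_one_div_mul_orderOf_le hb
  refine ⟨K, hK, fun t ht ↦ ?_⟩
  have h_nonneg : 0 ≤ fun ℓ : {ℓ : ℕ // ℓ.Prime ∧ ¬ℓ ∣ b ∧ t ≤ (ℓ : ℝ)} ↦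
      (1 : ℝ) / (((ℓ : ℕ) : ℝ) * (orderOf ((b : ZMod (ℓ : ℕ))) : ℝ)) := fun _ ↦ by positivity
  have h_partial : ∀ u : Finset {ℓ : ℕ // ℓ.Prime ∧ ¬ℓ ∣ b ∧ t ≤ (ℓ : ℝ)},
      ∑ ℓ ∈ u, (1 : ℝ) / (((ℓ : ℕ) : ℝ) * (orderOf ((b : ZMod (ℓ : ℕ))) : ℝ))
        ≤ K * t ^ (-(1 / 2 : ℝ)) := fun u ↦ by
    have h := hbound t ht (u.map (.subtype _)) fun ℓ hℓ ↦ by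
      obtain ⟨ℓ, -, rfl⟩ := mem_map.mp hℓ
      exact ℓ.2
    rw [sum_map] at h
    rwa [rpow_neg (by linarith), ← sqrt_eq_rpow, ← div_eq_mul_inv]
  exact ⟨summable_of_sum_le h_nonneg h_partial,
    (summable_of_sum_le h_nonneg h_partial).tsum_le_of_sum_le h_partial⟩
end

section
/- Let ℓ be a prime and r an integer. Then the cardinality of C_r(ℓ) equals ℓ(ℓ² − 2) if r ≡ 0 (mod ℓ), equals ℓ(ℓ² − ℓ − 1) if r ≡ 1 (mod ℓ), and equals ℓ(ℓ² − ℓ − 2) if r ≢ 0, 1 (mod ℓ). -/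
/-!
Over a field with `q` elements put `h = 1 - g`. Then `det g + 1 - tr g = det h`, and `g` is
invertible iff `det (1 - h) = det h + 1 - tr h ≠ 0`. So the matrices `g` counted are in bijection
with the matrices `h = !![a, b; c, d]` with `det h = s` and `a + d ≠ s + 1`. For a fixed diagonal
`(a, d)` the equation `b c = a d - s` has `q - 1` solutions, or `2q - 1` when `a d = s`; and the
diagonals with `a d = s` and `a + d = s + 1` are exactly `(1, s)` and `(s, 1)`, the roots of
`(x - 1)(x - s)`.
-/

open Matrix

/-- `C_r(n)` is the set of matrices `g ∈ GL₂(ℤ/nℤ)` with `det g + 1 - tr g ≡ r (mod n)`. -/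
def Cset (n : ℕ) (r : ℤ) : Set (GL (Fin 2) (ZMod n)) :=
  {g | Matrix.det (g : Matrix (Fin 2) (Fin 2) (ZMod n)) + 1
        - Matrix.trace (g : Matrix (Fin 2) (Fin 2) (ZMod n)) = (r : ZMod n)}

open Finset

theorem Finset.card_filter_prod_eq_sum {α β : Type*} [Fintype α] [Fintype β]
    (P : α × β → Prop) [DecidablePred P] :
    #{p : α × β | P p} = ∑ a, #{b | P (a, b)} := by
  simp only [card_filter, Fintype.sum_prod_type]

noncomputable def Units.subtypeEquiv {M : Type*} [Monoid M] (P : M → Prop) :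
    {u : Mˣ // P u} ≃ {x : M // IsUnit x ∧ P x} where
  toFun u := ⟨u.1, u.1.isUnit, u.2⟩
  invFun x := ⟨x.2.1.unit, x.2.2⟩
  left_inv _ := Subtype.ext (Units.ext rfl)
  right_inv _ := rfl

theorem Matrix.det_one_sub_fin_two {R : Type*} [CommRing R] (M : Matrix (Fin 2) (Fin 2) R) :
    (1 - M).det = M.det + 1 - M.trace := by
  simp [det_fin_two, trace_fin_two]
  ring

theorem Matrix.trace_one_sub_fin_two {R : Type*} [CommRing R] (M : Matrix (Fin 2) (Fin 2) R) :
    (1 - M).trace = 2 - M.trace := by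
  simp [trace_fin_two]

/-- The entries are listed as `((a, d), (b, c))`, diagonal first. -/
@[simps apply]
def Matrix.finTwoEquiv (R : Type*) : (R × R) × (R × R) ≃ Matrix (Fin 2) (Fin 2) R where
  toFun p := !![p.1.1, p.2.1; p.2.2, p.1.2]
  invFun M := ((M 0 0, M 1 1), (M 0 1, M 1 0))
  left_inv _ := rfl
  right_inv M := (eta_fin_two M).symm

theorem card_filter_mul_eq {G₀ : Type*} [GroupWithZero G₀] [Fintype G₀] [DecidableEq G₀]
    (m : G₀) :
    #{p : G₀ × G₀ | p.1 * p.2 = m} =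
      Fintype.card G₀ - 1 + if m = 0 then Fintype.card G₀ else 0 := by
  have fiber (b : G₀) (hb : b ≠ 0) : #{c | b * c = m} = 1 :=
    card_eq_one.mpr ⟨b⁻¹ * m, by ext c; simp [eq_inv_mul_iff_mul_eq₀ hb]⟩
  rw [card_filter_prod_eq_sum, ← add_sum_erase _ _ (mem_univ 0),
    sum_congr rfl fun b hb => fiber b (ne_of_mem_erase hb)]
  split_ifs with hm
  · simp [hm, card_univ, add_comm]
  · simp [Ne.symm hm]

theorem card_filter_add_ne {G : Type*} [AddGroup G] [Fintype G] [DecidableEq G] (t : G) :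
    #{p : G × G | p.1 + p.2 ≠ t} = Fintype.card G * (Fintype.card G - 1) := by
  have fiber (a : G) : #{d | a + d ≠ t} = Fintype.card G - 1 := by
    rw [← card_univ, ← card_erase_of_mem (mem_univ (-a + t))]
    congr 1; ext d; simp [eq_neg_add_iff_add_eq]
  simp [card_filter_prod_eq_sum, fiber, card_univ]

theorem filter_mul_eq_and_add_eq_add_one {R : Type*} [CommRing R] [IsDomain R] [Fintype R]
    [DecidableEq R] (s : R) :
    ({p : R × R | p.1 * p.2 = s ∧ p.1 + p.2 = s + 1} : Finset (R × R)) = {(1, s), (s, 1)} := by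
  ext ⟨a, d⟩
  simp only [mem_filter, mem_univ, true_and, mem_insert, mem_singleton, Prod.mk.injEq]
  constructor
  · rintro ⟨hmul, hadd⟩
    obtain rfl : d = s + 1 - a := by linear_combination hadd
    have : (a - 1) * (a - s) = 0 := by linear_combination -hmul
    rcases mul_eq_zero.mp this with h | h
    · exact .inl ⟨by linear_combination h, by linear_combination -h⟩
    · exact .inr ⟨by linear_combination h, by linear_combination -h⟩
  · rintro (⟨rfl, rfl⟩ | ⟨rfl, rfl⟩) <;> constructor <;> ring

section FiniteField

variable {F : Type*} [Field F] [Fintype F] [DecidableEq F]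

local notation "q" => Fintype.card F

theorem card_filter_det_eq_trace_ne (s t : F) :
    #{M : Matrix (Fin 2) (Fin 2) F | M.det = s ∧ M.trace ≠ t} =
      q * (q - 1) * (q - 1) + q * #{x : F × F | x.1 * x.2 = s ∧ x.1 + x.2 ≠ t} := by
  have fiber (x : F × F) : #{y : F × F | x.1 * x.2 - y.1 * y.2 = s ∧ x.1 + x.2 ≠ t} =
      if x.1 + x.2 ≠ t then q - 1 + (if x.1 * x.2 = s then q else 0) else 0 := by
    by_cases ht : x.1 + x.2 = t
    · simp [ht]
    · have h := card_filter_mul_eq (x.1 * x.2 - s)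
      simp only [sub_eq_zero] at h
      rw [if_pos ht, ← h]
      congr 1; ext y; simp only [mem_filter, mem_univ, true_and, ne_eq, ht, not_false_eq_true,
        and_true]
      constructor <;> intro h <;> linear_combination -h
  rw [← card_equiv (finTwoEquiv F) (s := {p : (F × F) × (F × F) |
      p.1.1 * p.1.2 - p.2.1 * p.2.2 = s ∧ p.1.1 + p.1.2 ≠ t})
      fun p => by simp [det_fin_two_of, trace_fin_two_of]]
  rw [card_filter_prod_eq_sum]
  simp only [fiber]
  rw [← sum_filter, sum_add_distrib, sum_const, ← sum_filter, sum_const, card_filter_add_ne,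
    filter_filter]
  simp only [smul_eq_mul, and_comm]
  ring

theorem card_GL_det_add_one_sub_trace_eq (s : F) :
    Nat.card {g : GL (Fin 2) F // det (g : Matrix (Fin 2) (Fin 2) F) + 1
        - trace (g : Matrix (Fin 2) (Fin 2) F) = s} =
      #{M : Matrix (Fin 2) (Fin 2) F | M.det = s ∧ M.trace ≠ s + 1} := by
  rw [Nat.card_congr (Units.subtypeEquiv fun M : Matrix (Fin 2) (Fin 2) F =>
      M.det + 1 - M.trace = s), Nat.card_eq_fintype_card, Fintype.card_subtype]
  refine card_equiv (Equiv.subLeft 1) fun M => ?_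
  simp only [mem_filter, mem_univ, true_and, Equiv.subLeft_apply, det_one_sub_fin_two,
    trace_one_sub_fin_two, isUnit_iff_isUnit_det, isUnit_iff_ne_zero]
  constructor
  · rintro ⟨hdet, rfl⟩
    exact ⟨rfl, fun h => hdet (by linear_combination -h)⟩
  · rintro ⟨rfl, htr⟩
    exact ⟨fun h => htr (by linear_combination -h), rfl⟩

theorem card_GL_det_add_one_sub_trace_add (s : F) :
    Nat.card {g : GL (Fin 2) F // det (g : Matrix (Fin 2) (Fin 2) F) + 1
        - trace (g : Matrix (Fin 2) (Fin 2) F) = s} + q * #({(1, s), (s, 1)} : Finset (F × F)) =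
      q * (q - 1) * (q - 1) + q * (q - 1 + if s = 0 then q else 0) := by
  rw [card_GL_det_add_one_sub_trace_eq, card_filter_det_eq_trace_ne,
    ← filter_mul_eq_and_add_eq_add_one, ← card_filter_mul_eq, add_assoc, ← mul_add,
    ← card_filter_add_card_filter_not (s := {x : F × F | x.1 * x.2 = s})
      (fun x => x.1 + x.2 = s + 1),
    filter_filter, filter_filter, add_comm (#_)]

theorem card_GL_det_add_one_sub_trace_eq_of_eq_zero {s : F} (hs : s = 0) :
    Nat.card {g : GL (Fin 2) F // det (g : Matrix (Fin 2) (Fin 2) F) + 1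
        - trace (g : Matrix (Fin 2) (Fin 2) F) = s} = q * (q ^ 2 - 2) := by
  have h := card_GL_det_add_one_sub_trace_add s
  subst hs
  rw [if_pos rfl, card_pair (by simp)] at h
  have hq : 2 ≤ q := Fintype.one_lt_card
  have hq2 : 2 ≤ q ^ 2 := by nlinarith
  zify [hq2, (by omega : 1 ≤ q)] at h ⊢
  linear_combination h

theorem card_GL_det_add_one_sub_trace_eq_of_eq_one {s : F} (hs : s = 1) :
    Nat.card {g : GL (Fin 2) F // det (g : Matrix (Fin 2) (Fin 2) F) + 1
        - trace (g : Matrix (Fin 2) (Fin 2) F) = s} = q * (q ^ 2 - q - 1) := by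
  have h := card_GL_det_add_one_sub_trace_add s
  subst hs
  rw [if_neg one_ne_zero, pair_eq_singleton, card_singleton] at h
  have hq : 2 ≤ q := Fintype.one_lt_card
  have hq2 : q + 1 ≤ q ^ 2 := by nlinarith
  zify [hq2, (by omega : q ≤ q ^ 2), (by omega : 1 ≤ q ^ 2 - q), (by omega : 1 ≤ q)] at h ⊢
  linear_combination h

theorem card_GL_det_add_one_sub_trace_eq_of_ne {s : F} (h0 : s ≠ 0) (h1 : s ≠ 1) :
    Nat.card {g : GL (Fin 2) F // det (g : Matrix (Fin 2) (Fin 2) F) + 1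
        - trace (g : Matrix (Fin 2) (Fin 2) F) = s} = q * (q ^ 2 - q - 2) := by
  have h := card_GL_det_add_one_sub_trace_add s
  rw [if_neg h0, card_pair (by simp [h1.symm])] at h
  have hq : 3 ≤ q := Fintype.two_lt_card_iff.mpr ⟨0, 1, s, zero_ne_one, h0.symm, h1.symm⟩
  have hq2 : q + 2 ≤ q ^ 2 := by nlinarith
  zify [hq2, (by omega : q ≤ q ^ 2), (by omega : 2 ≤ q ^ 2 - q), (by omega : 1 ≤ q)] at h ⊢
  linear_combination h

end FiniteField

/-- For a prime `ℓ` and an integer `r`, `|C_r(ℓ)|` equals `ℓ(ℓ²-2)` if `r ≡ 0 (mod ℓ)`,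
`ℓ(ℓ²-ℓ-1)` if `r ≡ 1 (mod ℓ)`, and `ℓ(ℓ²-ℓ-2)` otherwise. -/
theorem stmt6 (ℓ : ℕ) (hℓ : ℓ.Prime) (r : ℤ) :
    ((r : ZMod ℓ) = 0 → Nat.card (Cset ℓ r) = ℓ * (ℓ ^ 2 - 2)) ∧
    ((r : ZMod ℓ) = 1 → Nat.card (Cset ℓ r) = ℓ * (ℓ ^ 2 - ℓ - 1)) ∧
    ((r : ZMod ℓ) ≠ 0 ∧ (r : ZMod ℓ) ≠ 1 →
      Nat.card (Cset ℓ r) = ℓ * (ℓ ^ 2 - ℓ - 2)) := by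
  have : Fact ℓ.Prime := ⟨hℓ⟩
  refine ⟨fun h => ?_, fun h => ?_, fun ⟨h0, h1⟩ => ?_⟩
  · have hN := card_GL_det_add_one_sub_trace_eq_of_eq_zero h
    rwa [ZMod.card] at hN
  · have hN := card_GL_det_add_one_sub_trace_eq_of_eq_one h
    rwa [ZMod.card] at hN
  · have hN := card_GL_det_add_one_sub_trace_eq_of_ne h0 h1
    rwa [ZMod.card] at hN
end

section
/- Let ℓ be a prime, k ≥ 1 an integer, and r an integer with r ≢ 0 (mod ℓ). Then (1/φ(ℓ^k))·(ℓ−2)/(ℓ−1) ≤ |C_r(ℓ^k)| / |GL₂(ℤ/ℓ^kℤ)| ≤ 1/φ(ℓ^k). -/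
/-!
Put `N = ℓ ^ k`. Since `det (g - 1) = det g + 1 - tr g` and `r` is a unit, `g ↦ g - 1` identifies
`C_r(N)` with the `h ∈ GL₂(ℤ/N)` of determinant `r` for which `h + 1` is invertible, i.e.
`det (h + 1) = r + tr h + 1` is a unit, i.e. `tr h ≢ -(r + 1) (mod ℓ)`. The determinant is
surjective with fibres of equal size, so `|GL₂(ℤ/N)| = φ(N) · #{det h = r}`, and it remains to see
that at most a fraction `1/(ℓ - 1)` of the determinant-`r` matrices have trace `≡ -(r + 1)`.
Reduction mod `ℓ` maps the determinant-`r` matrices onto those over `𝔽_ℓ` with fibres of equal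
size (cosets of the kernel of `h ↦ (h mod ℓ, det h)`), so this fraction may be computed over
`𝔽_ℓ`. There `ℓ(ℓ² - 1)` matrices have determinant `r`, by `|GL₂(𝔽_ℓ)| = (ℓ² - 1)(ℓ² - ℓ)`, and at
most `ℓ(ℓ + 1)` of them have a prescribed trace.
-/

open Matrix

open Finset

theorem Matrix.det_add_one_fin_two {R : Type*} [CommRing R] (m : Matrix (Fin 2) (Fin 2) R) :
    (m + 1).det = m.det + m.trace + 1 := by
  simp only [det_fin_two, trace_fin_two, add_apply, one_apply_eq, one_apply_ne, ne_eq,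
    Fin.zero_eq_one_iff, Fin.one_eq_zero_iff, OfNat.ofNat_ne_one, not_false_eq_true]
  ring

theorem Matrix.det_sub_one_fin_two {R : Type*} [CommRing R] (m : Matrix (Fin 2) (Fin 2) R) :
    (m - 1).det = m.det + 1 - m.trace := by
  simp only [det_fin_two, trace_fin_two, sub_apply, one_apply_eq, one_apply_ne, ne_eq,
    Fin.zero_eq_one_iff, Fin.one_eq_zero_iff, OfNat.ofNat_ne_one, not_false_eq_true]
  ring

namespace Matrix.GeneralLinearGroup

variable {n R S : Type*} [Fintype n] [DecidableEq n] [CommRing R] [CommRing S]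

theorem map_surjective {f : R →+* S} (hf : Function.Surjective f) [IsLocalHom f] :
    Function.Surjective (map f : GL n R →* GL n S) := by
  intro g'
  set m : Matrix n n R := (g' : Matrix n n S).map (Function.surjInv hf)
  have hm : f.mapMatrix m = g' := by ext; simp [m, Function.surjInv_eq hf]
  have hunit : IsUnit m := by
    rw [isUnit_iff_isUnit_det]
    refine isUnit_of_map_unit f _ ?_
    rw [RingHom.map_det, hm]
    exact (det g').isUnit
  exact ⟨hunit.unit, Units.ext hm⟩

theorem exists_map_eq_one_det_eq [Nonempty n] (f : R →+* S) {v : Rˣ} (hv : f v = 1) :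
    ∃ d : GL n R, map f d = 1 ∧ det d = v := by
  obtain ⟨i⟩ := ‹Nonempty n›
  refine ⟨⟨diagonal fun j ↦ if j = i then (v : R) else 1,
    diagonal fun j ↦ if j = i then (v⁻¹ : Rˣ).1 else 1, ?_, ?_⟩, ?_, ?_⟩
  · simp only [diagonal_mul_diagonal, mul_ite, ite_mul, Units.mul_inv, one_mul, mul_one,
      diagonal_eq_one]
    funext j; split_ifs <;> simp
  · simp only [diagonal_mul_diagonal, mul_ite, ite_mul, Units.inv_mul, one_mul, mul_one,
      diagonal_eq_one]
    funext j; split_ifs <;> simp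
  · ext j l
    simp only [Matrix.GeneralLinearGroup.map_apply, diagonal_apply, Units.val_one, one_apply]
    split_ifs <;> simp [hv]
  · ext; simp [det]

theorem exists_map_eq_det_eq [Nonempty n] {f : R →+* S} (hf : Function.Surjective f)
    [IsLocalHom f] {g' : GL n S} {u : Rˣ} (hu : Units.map (f : R →* S) u = det g') :
    ∃ g : GL n R, map f g = g' ∧ det g = u := by
  obtain ⟨g, rfl⟩ := map_surjective hf g'
  have hv : Units.map (f : R →* S) ((det g)⁻¹ * u) = 1 := by
    rw [map_mul, map_inv, hu, GeneralLinearGroup.map_det, inv_mul_cancel]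
  obtain ⟨d, hd, hdet⟩ := exists_map_eq_one_det_eq (n := n) f (v := (det g)⁻¹ * u)
    (by simpa using congrArg Units.val hv)
  exact ⟨g * d, by rw [map_mul, hd, mul_one], by rw [map_mul, hdet, mul_inv_cancel_left]⟩

theorem isUnit_add_one_iff_fin_two {K : Type*} [Field K] (f : R →+* K) [IsLocalHom f]
    (g : GL (Fin 2) R) :
    IsUnit (g + 1 : Matrix (Fin 2) (Fin 2) R) ↔
      f (g : Matrix (Fin 2) (Fin 2) R).det + (map f g : Matrix (Fin 2) (Fin 2) K).trace + 1 ≠ 0 :=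
    by
  rw [isUnit_iff_isUnit_det, ← isUnit_map_iff f, isUnit_iff_ne_zero, det_add_one_fin_two,
    map_add, map_add, map_one, AddMonoidHom.map_trace f]
  rfl

variable [Fintype R] [DecidableEq R]

theorem card_filter_coe_eq (P : Matrix n n R → Prop) [DecidablePred P]
    (hP : ∀ m, P m → IsUnit m) :
    #{g : GL n R | P g} = #{m : Matrix n n R | P m} := by
  refine card_bij (fun g _ ↦ (g : Matrix n n R)) (by simp) (fun _ _ _ _ ↦ Units.ext) ?_
  intro m hm
  rw [mem_filter] at hm
  exact ⟨(hP m hm.2).unit, by simpa using hm.2, rfl⟩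

theorem card_eq_card_units_mul_card_filter_det [Nonempty n] (u : Rˣ) :
    Nat.card (GL n R) = Nat.card Rˣ * #{g : GL n R | det g = u} := by
  rw [Nat.card_eq_fintype_card, Nat.card_eq_fintype_card, ← card_univ,
    card_eq_sum_card_fiberwise (f := det) (t := univ) (fun _ _ ↦ mem_univ _)]
  rw [sum_congr rfl fun v _ ↦
    MonoidHom.card_fiber_eq_of_mem_range det (det_surjective v) (det_surjective u)]
  simp

theorem card_filter_det_sub_one_eq (u : Rˣ) :
    #{g : GL n R | (g - 1 : Matrix n n R).det = u} =
      #{h : GL n R | det h = u ∧ IsUnit (h + 1 : Matrix n n R)} := by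
  have hsub : ∀ g : GL n R, (g - 1 : Matrix n n R).det = u → IsUnit (g - 1 : Matrix n n R) :=
    fun g hg ↦ (isUnit_iff_isUnit_det _).mpr (hg ▸ u.isUnit)
  refine card_bij' (fun g hg ↦ (hsub g (mem_filter.mp hg).2).unit)
    (fun h hh ↦ (mem_filter.mp hh).2.2.unit) ?_ ?_ ?_ ?_
  · intro g hg
    rw [mem_filter] at hg ⊢
    refine ⟨mem_univ _, Units.ext ?_, ?_⟩
    · simpa using hg.2
    · simp
  · intro h hh
    rw [mem_filter] at hh ⊢
    refine ⟨mem_univ _, ?_⟩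
    simpa [Units.ext_iff] using hh.2.1
  · intro g hg; ext : 1; simp
  · intro h hh; ext : 1; simp

variable [Fintype S] [DecidableEq S]

theorem card_filter_det_eq_and_map [Nonempty n] {f : R →+* S} (hf : Function.Surjective f)
    [IsLocalHom f] (u : Rˣ) (Q : GL n S → Prop) [DecidablePred Q] :
    #{g : GL n R | det g = u ∧ Q (map f g)} =
      #{h : GL n S | det h = Units.map (f : R →* S) u ∧ Q h} *
        #{g : GL n R | map f g = 1 ∧ det g = 1} := by
  let ψ : GL n R →* GL n S × Rˣ := (map f).prod det
  set s : Finset (GL n R) := {g | det g = u ∧ Q (map f g)}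
  set t : Finset (GL n S) := {h | det h = Units.map (f : R →* S) u ∧ Q h}
  have hmaps : ∀ g ∈ s, map f g ∈ t := by
    intro g hg
    rw [mem_filter] at hg ⊢
    exact ⟨mem_univ _, by rw [GeneralLinearGroup.map_det, hg.2.1], hg.2.2⟩
  have hfiber : ∀ h ∈ t, #{g ∈ s | map f g = h} = #{g : GL n R | ψ g = (h, u)} := by
    intro h hh
    rw [mem_filter] at hh
    congr 1
    ext g
    simp only [s, mem_filter, mem_univ, true_and, ψ, MonoidHom.prod_apply, Prod.mk.injEq]
    constructor
    · rintro ⟨⟨hdet, -⟩, hg⟩; exact ⟨hg, hdet⟩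
    · rintro ⟨hg, hdet⟩; exact ⟨⟨hdet, hg ▸ hh.2.2⟩, hg⟩
  have hker : ∀ h ∈ t,
      #{g : GL n R | ψ g = (h, u)} = #{g : GL n R | map f g = 1 ∧ det g = 1} := by
    intro h hh
    rw [mem_filter] at hh
    obtain ⟨g, hg⟩ := exists_map_eq_det_eq hf hh.2.1.symm
    rw [MonoidHom.card_fiber_eq_of_mem_range ψ ⟨g, by simp [ψ, hg]⟩ ⟨1, rfl⟩]
    simp [ψ, Prod.ext_iff]
  rw [card_eq_sum_card_fiberwise hmaps, sum_congr rfl hfiber, sum_congr rfl hker, sum_const,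
    smul_eq_mul]

end Matrix.GeneralLinearGroup

section FinTwo

variable {F : Type*} [Field F] [Fintype F] [DecidableEq F]

theorem card_filter_mul_sub_eq_le_two (r c : F) : #{a : F | a * (c - a) = r} ≤ 2 := by
  rcases (filter (fun a : F ↦ a * (c - a) = r) univ).eq_empty_or_nonempty with
    h | ⟨a₀, ha₀⟩
  · simp [h]
  rw [mem_filter] at ha₀
  refine (card_le_card fun a ha ↦ ?_).trans (card_le_two (a := a₀) (b := c - a₀))
  rw [mem_filter] at ha
  have : (a - a₀) * (a - (c - a₀)) = 0 := by linear_combination ha₀.2 - ha.2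
  rcases mul_eq_zero.mp this with h | h
  · simp [sub_eq_zero.mp h]
  · simp [sub_eq_zero.mp h]

theorem card_filter_det_trace_le (r c : F) :
    #{m : Matrix (Fin 2) (Fin 2) F | m.det = r ∧ m.trace = c} ≤
      Fintype.card F * (Fintype.card F + 1) := by
  set s : Finset (Matrix (Fin 2) (Fin 2) F) := {m | m.det = r ∧ m.trace = c}
  have hmem : ∀ m ∈ s, m 0 0 * m 1 1 - m 0 1 * m 1 0 = r ∧ m 1 1 = c - m 0 0 := by
    intro m hm
    rw [mem_filter, det_fin_two, trace_fin_two] at hm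
    exact ⟨hm.2.1, by rw [← hm.2.2]; ring⟩
  -- With `b = m 0 1`: if `b ≠ 0` then `(m 0 0, b)` determines `m`; if `b = 0` then `m 0 0` is a
  -- root of `a * (c - a) = r` and `m 1 0` is free.
  have hzero : #{m ∈ s | m 0 1 = 0} ≤ 2 * Fintype.card F := by
    calc #{m ∈ s | m 0 1 = 0}
        ≤ #(({a : F | a * (c - a) = r} : Finset F) ×ˢ (univ : Finset F)) := by
          refine card_le_card_of_injOn (fun m ↦ (m 0 0, m 1 0)) ?_ ?_
          · intro m hm
            rw [mem_coe, mem_filter] at hm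
            obtain ⟨hdet, htr⟩ := hmem m hm.1
            simp only [coe_product, Set.mem_prod, mem_coe, mem_filter, mem_univ, true_and,
              and_true]
            rw [← hdet, htr, hm.2]; ring
          · intro m hm m' hm' h
            rw [mem_coe, mem_filter] at hm hm'
            simp only [Prod.mk.injEq] at h
            rw [eta_fin_two m, eta_fin_two m', hm.2, hm'.2, (hmem m hm.1).2, (hmem m' hm'.1).2,
              h.1, h.2]
      _ ≤ 2 * Fintype.card F := by
          rw [card_product, card_univ]
          exact Nat.mul_le_mul_right _ (card_filter_mul_sub_eq_le_two r c)
  have hnonzero : #{m ∈ s | ¬m 0 1 = 0} ≤ Fintype.card F * (Fintype.card F - 1) := by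
    calc #{m ∈ s | ¬m 0 1 = 0}
        ≤ #((univ : Finset F) ×ˢ (univ.erase (0 : F))) := by
          refine card_le_card_of_injOn (fun m ↦ (m 0 0, m 0 1)) ?_ ?_
          · intro m hm
            rw [mem_coe, mem_filter] at hm
            simp [hm.2]
          · intro m hm m' hm' h
            rw [mem_coe, mem_filter] at hm hm'
            simp only [Prod.mk.injEq] at h
            obtain ⟨hdet, htr⟩ := hmem m hm.1
            obtain ⟨hdet', htr'⟩ := hmem m' hm'.1
            have h11 : m 1 1 = m' 1 1 := by rw [htr, htr', h.1]
            have h10 : m 1 0 = m' 1 0 := mul_left_cancel₀ hm.2 (by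
              linear_combination hdet' - hdet + m 0 0 * h11 + m' 1 1 * h.1 - m' 1 0 * h.2)
            rw [eta_fin_two m, eta_fin_two m', h.1, h.2, h10, h11]
      _ = Fintype.card F * (Fintype.card F - 1) := by
          rw [card_product, card_univ, card_erase_of_mem (mem_univ _), card_univ]
  have hq : 1 ≤ Fintype.card F := Fintype.card_pos
  rw [← card_filter_add_card_filter_not (p := fun m : Matrix (Fin 2) (Fin 2) F ↦ m 0 1 = 0)]
  calc _ ≤ 2 * Fintype.card F + Fintype.card F * (Fintype.card F - 1) :=
        add_le_add hzero hnonzero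
    _ = _ := by zify [hq]; ring

theorem sub_one_mul_card_filter_det_trace_le (r : Fˣ) (c : F) :
    (Fintype.card F - 1) * #{g : GL (Fin 2) F | GeneralLinearGroup.det g = r ∧
        (g : Matrix (Fin 2) (Fin 2) F).trace = c} ≤
      #{g : GL (Fin 2) F | GeneralLinearGroup.det g = r} := by
  have hGL := GeneralLinearGroup.card_eq_card_units_mul_card_filter_det (n := Fin 2) r
  rw [card_GL_field, Fin.prod_univ_two, Nat.card_eq_fintype_card, Fintype.card_units] at hGL
  have hcount : #{g : GL (Fin 2) F | GeneralLinearGroup.det g = r ∧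
      (g : Matrix (Fin 2) (Fin 2) F).trace = c} ≤ Fintype.card F * (Fintype.card F + 1) := by
    refine le_of_eq_of_le ?_ (card_filter_det_trace_le (r : F) c)
    rw [← GeneralLinearGroup.card_filter_coe_eq _
      fun m hm ↦ (isUnit_iff_isUnit_det m).mpr (hm.1 ▸ r.isUnit)]
    simp [Units.ext_iff]
  set q := Fintype.card F
  have hq : 1 < q := Fintype.one_lt_card
  simp only [Fin.val_zero, Fin.val_one, pow_zero, pow_one] at hGL
  refine Nat.le_of_mul_le_mul_left ?_ (Nat.sub_pos_of_lt hq)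
  calc (q - 1) * ((q - 1) * _) ≤ (q - 1) * ((q - 1) * (q * (q + 1))) := by gcongr
    _ = (q ^ 2 - 1) * (q ^ 2 - q) := by
      zify [hq.le, Nat.one_le_pow 2 q (by omega), Nat.le_self_pow two_ne_zero q]; ring
    _ = _ := hGL

theorem Matrix.GeneralLinearGroup.sub_one_mul_card_filter_det_trace_map_le {R : Type*}
    [CommRing R] [Fintype R] [DecidableEq R] {f : R →+* F} (hf : Function.Surjective f)
    [IsLocalHom f] (u : Rˣ) (c : F) :
    (Fintype.card F - 1) * #{g : GL (Fin 2) R | det g = u ∧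
        (map f g : Matrix (Fin 2) (Fin 2) F).trace = c} ≤
      #{g : GL (Fin 2) R | det g = u} := by
  have hall := card_filter_det_eq_and_map hf u (fun _ : GL (Fin 2) F ↦ True)
  simp only [and_true] at hall
  rw [card_filter_det_eq_and_map hf u
    (fun h : GL (Fin 2) F ↦ (h : Matrix (Fin 2) (Fin 2) F).trace = c), hall,
    ← mul_assoc]
  exact Nat.mul_le_mul_right _ (sub_one_mul_card_filter_det_trace_le _ c)

end FinTwo

theorem card_Cset_add_card_filter_trace_eq {N : ℕ} [NeZero N] {K : Type*} [Field K]
    [DecidableEq K] (f : ZMod N →+* K) [IsLocalHom f] {r : ℤ} (hr : IsUnit (r : ZMod N)) :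
    Nat.card (Cset N r) + #{g : GL (Fin 2) (ZMod N) | GeneralLinearGroup.det g = hr.unit ∧
        (GeneralLinearGroup.map f g : Matrix (Fin 2) (Fin 2) K).trace = -(f r + 1)} =
      #{g : GL (Fin 2) (ZMod N) | GeneralLinearGroup.det g = hr.unit} := by
  have hC : Cset N r =
      {g : GL (Fin 2) (ZMod N) | ((g : Matrix (Fin 2) (Fin 2) (ZMod N)) - 1).det = hr.unit} := by
    ext g; simp [Cset, det_sub_one_fin_two]
  rw [hC, Nat.card_eq_card_toFinset, Set.toFinset_ofPred,
    GeneralLinearGroup.card_filter_det_sub_one_eq, add_comm, ← filter_filter, ← filter_filter]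
  convert card_filter_add_card_filter_not _ using 3
  refine filter_congr fun g hg ↦ ?_
  rw [mem_filter, Units.ext_iff, GeneralLinearGroup.val_det_apply] at hg
  rw [GeneralLinearGroup.isUnit_add_one_iff_fin_two f, hg.2, IsUnit.unit_spec, map_intCast,
    Ne, eq_neg_iff_add_eq_zero, add_right_comm, add_comm]

theorem ZMod.isLocalHom_castHom_pow {ℓ k : ℕ} (hℓ : ℓ.Prime) (hk : k ≠ 0) :
    IsLocalHom (ZMod.castHom (dvd_pow_self ℓ hk) (ZMod ℓ)) := by
  have : NeZero (ℓ ^ k) := ⟨pow_ne_zero _ hℓ.ne_zero⟩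
  refine ⟨fun x hx ↦ ?_⟩
  rw [← ZMod.natCast_zmod_val x] at hx ⊢
  rw [map_natCast, ZMod.isUnit_iff_coprime] at hx
  rwa [ZMod.isUnit_iff_coprime, Nat.coprime_pow_right_iff (Nat.pos_of_ne_zero hk)]

theorem le_sub_div_and_sub_div_le {ℓ φ A B : ℝ} (hℓ : 2 ≤ ℓ) (hφ : 0 < φ) (hA : 0 < A)
    (hB : 0 ≤ B) (hBA : (ℓ - 1) * B ≤ A) :
    1 / φ * ((ℓ - 2) / (ℓ - 1)) ≤ (A - B) / (φ * A) ∧ (A - B) / (φ * A) ≤ 1 / φ := by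
  constructor
  · rw [div_mul_div_comm, div_le_div_iff₀ (by nlinarith) (by positivity)]
    nlinarith [mul_le_mul_of_nonneg_left hBA hφ.le]
  · rw [div_le_div_iff₀ (by positivity) hφ]
    nlinarith [mul_nonneg hφ.le hB]

/-- For a prime `ℓ`, `k ≥ 1` and an integer `r ≢ 0 (mod ℓ)`:
`(1/φ(ℓ^k))·(ℓ-2)/(ℓ-1) ≤ |C_r(ℓ^k)|/|GL₂(ℤ/ℓ^kℤ)| ≤ 1/φ(ℓ^k)`. -/
theorem stmt7 (ℓ k : ℕ) (hℓ : ℓ.Prime) (hk : 1 ≤ k) (r : ℤ) (hr : (r : ZMod ℓ) ≠ 0) :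
    (1 / (Nat.totient (ℓ ^ k) : ℝ)) * (((ℓ : ℝ) - 2) / ((ℓ : ℝ) - 1))
      ≤ (Nat.card (Cset (ℓ ^ k) r) : ℝ) / (Nat.card (GL (Fin 2) (ZMod (ℓ ^ k))) : ℝ) ∧
    (Nat.card (Cset (ℓ ^ k) r) : ℝ) / (Nat.card (GL (Fin 2) (ZMod (ℓ ^ k))) : ℝ)
      ≤ 1 / (Nat.totient (ℓ ^ k) : ℝ) := by
  have : Fact ℓ.Prime := ⟨hℓ⟩
  have : NeZero (ℓ ^ k) := ⟨pow_ne_zero _ hℓ.ne_zero⟩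
  have hk0 : k ≠ 0 := Nat.one_le_iff_ne_zero.mp hk
  set f := ZMod.castHom (dvd_pow_self ℓ hk0) (ZMod ℓ)
  have := ZMod.isLocalHom_castHom_pow hℓ hk0
  have hru : IsUnit (r : ZMod (ℓ ^ k)) := (isUnit_map_iff f _).mp (by simpa [f] using hr)
  have hGL := GeneralLinearGroup.card_eq_card_units_mul_card_filter_det (n := Fin 2) hru.unit
  rw [Nat.card_eq_fintype_card (α := (ZMod (ℓ ^ k))ˣ), ZMod.card_units_eq_totient] at hGL
  have hC := card_Cset_add_card_filter_trace_eq f hru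
  have hB := GeneralLinearGroup.sub_one_mul_card_filter_det_trace_map_le
    (f := f) (ZMod.castHom_surjective (dvd_pow_self ℓ hk0)) hru.unit (-(f r + 1))
  set A := #{g : GL (Fin 2) (ZMod (ℓ ^ k)) | GeneralLinearGroup.det g = hru.unit}
  set B := #{g : GL (Fin 2) (ZMod (ℓ ^ k)) | GeneralLinearGroup.det g = hru.unit ∧
    (GeneralLinearGroup.map f g : Matrix (Fin 2) (Fin 2) (ZMod ℓ)).trace = -(f r + 1)}
  have hCard : (Nat.card (Cset (ℓ ^ k) r) : ℝ) = A - B := by rw [← hC]; push_cast; ring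
  have hApos : 0 < A := Nat.pos_of_ne_zero fun h ↦ Nat.card_pos.ne' (by rw [hGL, h, mul_zero])
  rw [hCard, hGL, Nat.cast_mul]
  refine le_sub_div_and_sub_div_le (by exact_mod_cast hℓ.two_le)
    (by exact_mod_cast Nat.totient_pos.mpr (pow_pos hℓ.pos k)) (by exact_mod_cast hApos)
    (Nat.cast_nonneg _) ?_
  have := (Nat.cast_le (α := ℝ)).mpr hB
  rwa [ZMod.card, Nat.cast_mul, Nat.cast_sub hℓ.one_le, Nat.cast_one] at this
end

section
/- Let ℓ be a prime, k ≥ 1 an integer, and r an integer with r ≡ 0 (mod ℓ). Then (1/φ(ℓ^k))·(ℓ−2)/(ℓ−1) ≤ |C_r(ℓ^k)| / |GL₂(ℤ/ℓ^kℤ)| ≤ (1/φ(ℓ^k))·(1 + 1/((ℓ³−1)(ℓ²−1))). -/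
/-!
Write `g = 1 + X`. The condition defining `C_r` becomes `det X = r`, and since `r ≡ 0 (mod ℓ)`,
`det g = 1 + tr X + det X` is a unit exactly when `1 + tr X` is. Sorting `X = !![a, b; c, e]` by
its diagonal, `|C_r(n)|` is the sum of `N(ae - r)` over the pairs `(a, e)` with `1 + a + e` a unit,
where `N(m) = #{(b, c) | bc = m} = ∑_{d ∣ gcd(m, n)} d φ(n / d)`. For `n = ℓ^k` this reads
`|C_r| = ∑_{i ≤ k} ℓ^i φ(ℓ^(k-i)) T_i`, where `T_i` counts the pairs with `ℓ^i ∣ ae - r`, and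
reduction modulo `ℓ^i` turns `T_i` into the same count `U_i` over `ℤ/ℓ^i`. At least `2ℓ^(i-1)`
solutions of `ae = r` have `{a, e} ≡ {-1, 0} (mod ℓ)`, so `U_i ≤ N(r) - 2ℓ^(i-1)`, and these bounds
telescope to `|C_r| ≤ |GL₂(ℤ/ℓ^k)| / φ(ℓ^k)`. The terms `i = 0, 1` alone, with `U_1 = 2ℓ - 3`
over `𝔽_ℓ`, give the lower bound.
-/

open Matrix

open Finset
open scoped Nat

lemma AddMonoidHom.card_filter_comp_mul_card {G H : Type*} [AddGroup G] [AddGroup H]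
    [Fintype G] [Fintype H] [DecidableEq H] (f : G →+ H) (hf : Function.Surjective f)
    (P : H → Prop) [DecidablePred P] :
    #{x | P (f x)} * Fintype.card H = Fintype.card G * #{y | P y} := by
  have hsplit (Q : H → Prop) [DecidablePred Q] :
      #{x | Q (f x)} = #{y | Q y} * #{x | f x = 0} := by
    rw [card_eq_sum_card_fiberwise (f := f) (t := {y | Q y}) (fun x hx => by simpa using hx),
      ← smul_eq_mul, ← sum_const]
    refine sum_congr rfl fun y hy => ?_
    rw [← card_fiber_eq_of_mem_range f (hf y) ⟨0, map_zero f⟩, filter_filter]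
    congr 1 with x
    simp only [mem_filter, mem_univ, true_and] at hy ⊢
    exact ⟨And.right, fun h => ⟨h ▸ hy, h⟩⟩
  have hG := hsplit fun _ => True
  simp only [filter_true, card_univ] at hG
  rw [hsplit P, hG]
  ring

lemma Units.natCard_setOf {M : Type*} [Monoid M] (P : M → Prop) :
    Nat.card {u : Mˣ | P u} = Nat.card {x | IsUnit x ∧ P x} :=
  Nat.card_congr
    { toFun u := ⟨(u.1 : M), u.1.isUnit, u.2⟩
      invFun x := ⟨x.2.1.unit, x.2.2⟩
      left_inv u := by ext; rfl
      right_inv x := rfl }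

lemma Units.natCard_eq {M : Type*} [Monoid M] : Nat.card Mˣ = Nat.card {x : M | IsUnit x} := by
  simpa using Units.natCard_setOf (M := M) fun _ => True

lemma Finset.sum_Ico_add_le_of_forall_add_le {f g : ℕ → ℕ} {a b : ℕ} (hab : a ≤ b)
    (h : ∀ i ∈ Ico a b, g i + f (i + 1) ≤ f i) : ∑ i ∈ Ico a b, g i + f b ≤ f a := by
  induction b, hab using Nat.le_induction with
  | base => simp
  | succ b hab ih =>
    rw [sum_Ico_succ_top hab]
    have hb := h b (mem_Ico.mpr ⟨hab, b.lt_succ_self⟩)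
    have := ih fun i hi => h i (Ico_subset_Ico_right b.le_succ hi)
    omega

namespace ZMod

variable {n m : ℕ} [NeZero n]

lemma card_filter_castHom_mul [NeZero m] (h : m ∣ n) (P : ZMod m → Prop) [DecidablePred P] :
    #{x : ZMod n | P (castHom h (ZMod m) x)} * m = n * #{y | P y} := by
  simpa [ZMod.card] using (castHom h (ZMod m)).toAddMonoidHom.card_filter_comp_mul_card
    (ringHom_surjective _) P

lemma card_filter_castHom_eq_mul [NeZero m] (h : m ∣ n) (y : ZMod m) :
    #{x : ZMod n | castHom h (ZMod m) x = y} * m = n := by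
  simpa [filter_eq'] using card_filter_castHom_mul h (· = y)

lemma card_filter_prod_castHom_mul [NeZero m] (h : m ∣ n) (P : ZMod m × ZMod m → Prop)
    [DecidablePred P] :
    #{x : ZMod n × ZMod n | P (castHom h (ZMod m) x.1, castHom h (ZMod m) x.2)} * m ^ 2
      = n ^ 2 * #{y | P y} := by
  let f := (castHom h (ZMod m)).toAddMonoidHom
  have hsurj : Function.Surjective (f.prodMap f) :=
    (ringHom_surjective (castHom h (ZMod m))).prodMap (ringHom_surjective (castHom h (ZMod m)))
  have := (f.prodMap f).card_filter_comp_mul_card hsurj P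
  simp only [Fintype.card_prod, ZMod.card, ← sq] at this
  exact this

lemma card_filter_mapMatrix_castHom_mul [NeZero m] (h : m ∣ n)
    (P : Matrix (Fin 2) (Fin 2) (ZMod m) → Prop) [DecidablePred P] :
    #{A : Matrix (Fin 2) (Fin 2) (ZMod n) | P ((castHom h (ZMod m)).mapMatrix A)} * m ^ 4
      = n ^ 4 * #{B | P B} := by
  have hsurj : Function.Surjective
      ((castHom h (ZMod m)).mapMatrix : Matrix (Fin 2) (Fin 2) _ → _) := fun B => by
    obtain ⟨A, hA⟩ := (ringHom_surjective (castHom h (ZMod m))).comp_left.comp_left B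
    exact ⟨Matrix.of A, hA⟩
  have hcard (N : ℕ) [NeZero N] : Fintype.card (Matrix (Fin 2) (Fin 2) (ZMod N)) = N ^ 4 := by
    rw [Fintype.card_eq_nat_card]
    simp only [Matrix, Nat.card_eq_fintype_card, Fintype.card_pi, ZMod.card, prod_const,
      card_univ, Fintype.card_fin]
    ring
  simpa [hcard] using
    (castHom h (ZMod m)).mapMatrix.toAddMonoidHom.card_filter_comp_mul_card hsurj P

lemma castHom_eq_zero_iff (h : m ∣ n) (x : ZMod n) : castHom h (ZMod m) x = 0 ↔ m ∣ x.val := by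
  rw [castHom_apply, cast_eq_val, natCast_eq_zero_iff]

lemma self_dvd_val_iff (x : ZMod n) : n ∣ x.val ↔ x = 0 := by
  rw [← natCast_eq_zero_iff, natCast_zmod_val]

lemma card_isUnit : #{x : ZMod n | IsUnit x} = φ n := by
  rw [← card_units_eq_totient, ← Nat.card_eq_fintype_card, Units.natCard_eq,
    Nat.card_coe_set_eq, ← coe_filter_univ, Set.ncard_coe_finset]

lemma card_filter_mul_eq (b y : ZMod n) :
    #{c | b * c = y} = if n.gcd b.val ∣ y.val then n.gcd b.val else 0 := by
  set d := n.gcd b.val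
  have hd : 0 < d := Nat.gcd_pos_of_pos_left _ (NeZero.pos n)
  have hmodEq (c : ZMod n) : b * c = y ↔ b.val * c.val ≡ y.val [MOD n] := by
    rw [← natCast_eq_natCast_iff, Nat.cast_mul, natCast_zmod_val, natCast_zmod_val,
      natCast_zmod_val]
  split_ifs with hdy
  · obtain ⟨y', hy'⟩ := hdy
    obtain ⟨b', hb'⟩ : d ∣ b.val := Nat.gcd_dvd_right _ _
    obtain ⟨n', hn'⟩ : d ∣ n := Nat.gcd_dvd_left _ _
    have hcop : n'.Coprime b' := by
      have h := Nat.coprime_div_gcd_div_gcd (m := n) (n := b.val) hd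
      change (n / d).Coprime (b.val / d) at h
      rwa [hb', Nat.mul_div_cancel_left _ hd, hn', Nat.mul_div_cancel_left _ hd] at h
    have : NeZero n' := ⟨by rintro rfl; exact NeZero.ne n (by simpa using hn')⟩
    have hdvd : n' ∣ n := Dvd.intro_left _ hn'.symm
    have hcancel (v : ℕ) : b.val * v ≡ y.val [MOD n] ↔ b' * v ≡ y' [MOD n'] := by
      rw [hb', hy', hn', mul_assoc, Nat.ModEq.mul_left_cancel_iff' hd.ne']
    -- after cancelling `d`, the multiplier `b'` is a unit modulo `n' = n / d`
    let u := unitOfCoprime b' hcop.symm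
    have hfiber (c : ZMod n) : b * c = y ↔ castHom hdvd (ZMod n') c = ↑u⁻¹ * y' := by
      rw [hmodEq, hcancel, ← natCast_eq_natCast_iff, Units.eq_inv_mul_iff_mul_eq, castHom_apply,
        cast_eq_val, Nat.cast_mul]
      rfl
    have hcard := card_filter_castHom_eq_mul hdvd (↑u⁻¹ * (y' : ZMod n'))
    rw [filter_congr fun c _ => hfiber c]
    refine Nat.eq_of_mul_eq_mul_right (Nat.pos_of_neZero n') ?_
    rw [hcard, hn']
  · rw [card_eq_zero, filter_eq_empty_iff]
    intro c _ hc
    exact hdy (((hmodEq c).mp hc).dvd_iff (Nat.gcd_dvd_left _ _) |>.mp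
      (dvd_mul_of_dvd_left (Nat.gcd_dvd_right _ _) _))

lemma card_filter_gcd_val_eq {d : ℕ} (hd : d ∣ n) :
    #{b : ZMod n | n.gcd b.val = d} = φ (n / d) := by
  rw [Nat.totient_div_of_dvd hd]
  refine card_nbij' val (fun k => (k : ZMod n)) ?_ ?_ ?_ ?_
  · intro b hb
    simpa [val_lt] using hb
  · intro k hk
    simp only [coe_filter, mem_range, Set.mem_ofPred_eq, mem_univ, true_and] at hk ⊢
    rw [val_natCast_of_lt hk.1, hk.2]
  · intro b _
    simp
  · intro k hk
    simp only [coe_filter, mem_range, Set.mem_ofPred_eq] at hk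
    exact val_natCast_of_lt hk.1

lemma card_filter_mul_eq_sum_divisors (y : ZMod n) :
    #{p : ZMod n × ZMod n | p.1 * p.2 = y}
      = ∑ d ∈ n.divisors, if d ∣ y.val then d * φ (n / d) else 0 := by
  rw [card_filter, Fintype.sum_prod_type]
  simp_rw [← card_filter, card_filter_mul_eq]
  rw [← sum_fiberwise_of_maps_to (g := fun b : ZMod n => n.gcd b.val) (t := n.divisors)
    (fun b _ => Nat.mem_divisors.mpr ⟨Nat.gcd_dvd_left _ _, NeZero.ne n⟩)]
  refine sum_congr rfl fun d hd => ?_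
  rw [sum_congr rfl fun b hb => by rw [(mem_filter.mp hb).2], sum_const, smul_eq_mul,
    card_filter_gcd_val_eq (Nat.dvd_of_mem_divisors hd)]
  split_ifs <;> ring

end ZMod

lemma Matrix.det_one_add_fin_two {R : Type*} [CommRing R] (X : Matrix (Fin 2) (Fin 2) R) :
    (1 + X).det = 1 + X.trace + X.det := by
  simp only [det_fin_two, trace_fin_two, add_apply, one_apply_eq, one_apply_ne, Fin.isValue,
    ne_eq, zero_ne_one, one_ne_zero, not_false_eq_true, zero_add]
  ring

@[simps]
def Matrix.diagOffDiagEquiv (R : Type*) : Matrix (Fin 2) (Fin 2) R ≃ (R × R) × (R × R) where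
  toFun X := ((X 0 0, X 1 1), (X 0 1, X 1 0))
  invFun p := !![p.1.1, p.2.1; p.2.2, p.1.2]
  left_inv X := by ext i j; fin_cases i <;> fin_cases j <;> rfl
  right_inv p := rfl

lemma Matrix.card_filter_det_eq_and_isUnit {R : Type*} [CommRing R] [Fintype R] [DecidableEq R]
    (r : R) :
    #{X : Matrix (Fin 2) (Fin 2) R | X.det = r ∧ IsUnit (1 + X.trace)}
      = ∑ x : R × R, if IsUnit (1 + x.1 + x.2) then #{y : R × R | y.1 * y.2 = x.1 * x.2 - r}
          else 0 := by
  rw [card_equiv (diagOffDiagEquiv R)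
    (t := {q | q.1.1 * q.1.2 - q.2.1 * q.2.2 = r ∧ IsUnit (1 + q.1.1 + q.1.2)})
    (by simp [det_fin_two, trace_fin_two, add_assoc])]
  rw [card_filter, Fintype.sum_prod_type]
  refine sum_congr rfl fun x _ => ?_
  split_ifs with hx
  · rw [card_filter]
    refine sum_congr rfl fun y _ => ?_
    have hsub (a b : R) : a - b = r ↔ b = a - r := by
      constructor <;> intro h <;> linear_combination -h
    simp only [hx, and_true, hsub]
  · simp [hx]

def traceUnitPairs (n d : ℕ) [NeZero n] (r : ℤ) : Finset (ZMod n × ZMod n) :=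
  {x | IsUnit (1 + x.1 + x.2) ∧ d ∣ (x.1 * x.2 - r).val}

lemma card_traceUnitPairs_one (n : ℕ) [NeZero n] (r : ℤ) :
    #(traceUnitPairs n 1 r) = n * φ n := by
  simp only [traceUnitPairs, one_dvd, and_true]
  rw [card_filter, Fintype.sum_prod_type]
  simp_rw [← card_filter]
  rw [sum_congr rfl fun a _ => ?_, sum_const, card_univ, ZMod.card, smul_eq_mul]
  rw [← ZMod.card_isUnit]
  exact card_equiv (Equiv.addLeft (1 + a)) fun e => by simp [add_assoc]

section PrimePower

variable {ℓ k : ℕ} [hℓ : Fact ℓ.Prime]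

lemma Nat.totient_prime_pow_add_pow_sub_one (hk : k ≠ 0) : φ (ℓ ^ k) + ℓ ^ (k - 1) = ℓ ^ k := by
  rw [Nat.totient_prime_pow hℓ.out (Nat.pos_of_ne_zero hk), ← mul_add_one,
    Nat.sub_add_cancel hℓ.out.one_le, ← pow_succ,
    Nat.sub_add_cancel (Nat.one_le_iff_ne_zero.mpr hk)]

lemma Nat.pow_mul_totient_pow_sub {i : ℕ} (hi : i < k) :
    ℓ ^ i * φ (ℓ ^ (k - i)) = φ (ℓ ^ k) := by
  rw [Nat.totient_prime_pow hℓ.out (by omega), Nat.totient_prime_pow hℓ.out (by omega),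
    ← mul_assoc, ← pow_add]
  congr 2
  omega

lemma Nat.totient_pow_le_pow_mul_totient_pow_sub {i : ℕ} (hi : i ≤ k) :
    φ (ℓ ^ k) ≤ ℓ ^ i * φ (ℓ ^ (k - i)) := by
  rcases hi.lt_or_eq with hi | rfl
  · exact (Nat.pow_mul_totient_pow_sub hi).ge
  · simpa using Nat.totient_le _

namespace ZMod

lemma card_filter_mul_eq_sum_pow (y : ZMod (ℓ ^ k)) :
    #{p : ZMod (ℓ ^ k) × ZMod (ℓ ^ k) | p.1 * p.2 = y}
      = ∑ i ∈ range (k + 1), if ℓ ^ i ∣ y.val then ℓ ^ i * φ (ℓ ^ (k - i)) else 0 := by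
  rw [card_filter_mul_eq_sum_divisors, Nat.divisors_prime_pow hℓ.out, sum_map]
  refine sum_congr rfl fun i hi => ?_
  simp [Nat.pow_div (Nat.lt_succ_iff.mp (mem_range.mp hi)) hℓ.out.pos]

lemma card_filter_mul_eq_le (y : ZMod (ℓ ^ k)) :
    #{p : ZMod (ℓ ^ k) × ZMod (ℓ ^ k) | p.1 * p.2 = y} ≤ k * φ (ℓ ^ k) + ℓ ^ k := by
  calc _ ≤ ∑ i ∈ range (k + 1), ℓ ^ i * φ (ℓ ^ (k - i)) := by
        rw [card_filter_mul_eq_sum_pow]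
        exact sum_le_sum fun i _ => by split_ifs <;> simp
    _ = k * φ (ℓ ^ k) + ℓ ^ k := by
        rw [sum_range_succ, sum_congr rfl fun i hi =>
          Nat.pow_mul_totient_pow_sub (mem_range.mp hi)]
        simp

lemma isUnit_castHom_iff {m : ℕ} (hm : m ∣ ℓ ^ k) (hℓm : ℓ ∣ m) (x : ZMod (ℓ ^ k)) :
    IsUnit (castHom hm (ZMod m) x) ↔ IsUnit x := by
  rw [castHom_apply, cast_eq_val, isUnit_iff_coprime]
  conv_rhs => rw [← natCast_zmod_val x, isUnit_iff_coprime]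
  exact ⟨fun h => (h.coprime_dvd_right hℓm).pow_right k, fun h => h.coprime_dvd_right hm⟩

lemma isUnit_iff_castHom_ne_zero (hk : k ≠ 0) (x : ZMod (ℓ ^ k)) :
    IsUnit x ↔ castHom (dvd_pow_self ℓ hk) (ZMod ℓ) x ≠ 0 := by
  rw [← isUnit_castHom_iff (dvd_pow_self ℓ hk) dvd_rfl, isUnit_iff_ne_zero]

lemma isUnit_add_iff (hk : k ≠ 0) {x y : ZMod (ℓ ^ k)}
    (hy : castHom (dvd_pow_self ℓ hk) (ZMod ℓ) y = 0) : IsUnit (x + y) ↔ IsUnit x := by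
  rw [isUnit_iff_castHom_ne_zero hk, isUnit_iff_castHom_ne_zero hk, map_add, hy, add_zero]

end ZMod

lemma natCard_GL_fin_two_zmod_pow (hk : k ≠ 0) :
    Nat.card (GL (Fin 2) (ZMod (ℓ ^ k))) * ℓ ^ 4
      = (ℓ ^ k) ^ 4 * ((ℓ ^ 2 - 1) * (ℓ ^ 2 - ℓ)) := by
  have hGL (n : ℕ) [NeZero n] :
      Nat.card (GL (Fin 2) (ZMod n)) = #{A : Matrix (Fin 2) (Fin 2) (ZMod n) | IsUnit A.det} := by
    rw [Units.natCard_eq, ← Set.ncard_coe_finset, coe_filter_univ, ← Nat.card_coe_set_eq]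
    simp only [isUnit_iff_isUnit_det]
  have hunit (A : Matrix (Fin 2) (Fin 2) (ZMod (ℓ ^ k))) : IsUnit A.det ↔
      IsUnit ((ZMod.castHom (dvd_pow_self ℓ hk) (ZMod ℓ)).mapMatrix A).det := by
    rw [← RingHom.map_det, ZMod.isUnit_castHom_iff _ dvd_rfl]
  rw [hGL, filter_congr fun A _ => hunit A]
  convert ZMod.card_filter_mapMatrix_castHom_mul _ fun B => IsUnit B.det
  rw [← hGL, card_GL_field, ZMod.card, Fin.prod_univ_two]
  simp

lemma natCard_GL_fin_two_zmod_pow_eq (hk : k ≠ 0) :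
    Nat.card (GL (Fin 2) (ZMod (ℓ ^ k))) = φ (ℓ ^ k) ^ 2 * (ℓ ^ k * (ℓ ^ k + ℓ ^ (k - 1))) := by
  refine Nat.eq_of_mul_eq_mul_right (pow_pos hℓ.out.pos 4) ?_
  rw [natCard_GL_fin_two_zmod_pow hk, Nat.totient_prime_pow hℓ.out (Nat.pos_of_ne_zero hk),
    ← pow_sub_mul_pow ℓ (Nat.one_le_iff_ne_zero.mpr hk)]
  have h1 : 1 ≤ ℓ := hℓ.out.one_le
  have h2 : 1 ≤ ℓ ^ 2 := Nat.one_le_pow _ _ hℓ.out.pos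
  have h3 : ℓ ≤ ℓ ^ 2 := Nat.le_self_pow two_ne_zero ℓ
  zify [h1, h2, h3]
  ring

lemma natCard_Cset (hk : k ≠ 0) {r : ℤ} (hr : (r : ZMod ℓ) = 0) :
    Nat.card (Cset (ℓ ^ k) r)
      = #{X : Matrix (Fin 2) (Fin 2) (ZMod (ℓ ^ k)) | X.det = r ∧ IsUnit (1 + X.trace)} := by
  refine (Units.natCard_setOf fun A : Matrix (Fin 2) (Fin 2) (ZMod (ℓ ^ k)) =>
    A.det + 1 - A.trace = r).trans ?_
  rw [← Set.ncard_coe_finset, coe_filter_univ, ← Nat.card_coe_set_eq]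
  refine (Nat.card_congr ((Equiv.addLeft 1).subtypeEquiv fun X => ?_)).symm
  have htr : (1 + X).trace = 2 + X.trace := by
    rw [trace_add, trace_one, Fintype.card_fin, Nat.cast_ofNat]
  simp only [Set.mem_ofPred_eq, Equiv.coe_addLeft, isUnit_iff_isUnit_det,
    det_one_add_fin_two, htr]
  rw [show 1 + X.trace + X.det + 1 - (2 + X.trace) = X.det by ring, and_comm (a := IsUnit _)]
  refine and_congr_right fun hX => ?_
  rw [hX, ZMod.isUnit_add_iff hk (x := 1 + X.trace) (by rw [map_intCast, hr])]

lemma natCard_Cset_eq_sum (hk : k ≠ 0) {r : ℤ} (hr : (r : ZMod ℓ) = 0) :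
    Nat.card (Cset (ℓ ^ k) r)
      = ∑ i ∈ range (k + 1), ℓ ^ i * φ (ℓ ^ (k - i)) * #(traceUnitPairs (ℓ ^ k) (ℓ ^ i) r) := by
  rw [natCard_Cset hk hr, card_filter_det_eq_and_isUnit]
  simp_rw [ZMod.card_filter_mul_eq_sum_pow, traceUnitPairs, card_filter, mul_sum]
  rw [sum_comm]
  refine sum_congr rfl fun x _ => ?_
  split_ifs <;> simp [*]

lemma card_traceUnitPairs_mul {m : ℕ} [NeZero m] (hm : m ∣ ℓ ^ k) (hℓm : ℓ ∣ m) (r : ℤ) :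
    #(traceUnitPairs (ℓ ^ k) m r) * m ^ 2 = (ℓ ^ k) ^ 2 * #(traceUnitPairs m m r) := by
  rw [traceUnitPairs, traceUnitPairs, ← ZMod.card_filter_prod_castHom_mul hm]
  congr 2
  refine filter_congr fun x _ => ?_
  rw [ZMod.self_dvd_val_iff, ← map_intCast (ZMod.castHom hm (ZMod m)), ← map_mul, ← map_sub,
    ZMod.castHom_eq_zero_iff, ← map_one (ZMod.castHom hm (ZMod m)), ← map_add, ← map_add,
    ZMod.isUnit_castHom_iff hm hℓm]

lemma two_mul_pow_le_card_mul_eq_and_not_isUnit (hk : k ≠ 0) {r : ℤ} (hr : (r : ZMod ℓ) = 0) :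
    2 * ℓ ^ (k - 1) ≤
      #{x : ZMod (ℓ ^ k) × ZMod (ℓ ^ k) | x.1 * x.2 = r ∧ ¬IsUnit (1 + x.1 + x.2)} := by
  set red := ZMod.castHom (dvd_pow_self ℓ hk) (ZMod ℓ)
  set S : Finset (ZMod (ℓ ^ k)) := {a | red a = -1}
  have hS : #S = ℓ ^ (k - 1) := by
    refine Nat.eq_of_mul_eq_mul_right hℓ.out.pos ((ZMod.card_filter_castHom_eq_mul _ _).trans ?_)
    rw [← pow_succ, Nat.sub_add_cancel (Nat.one_le_iff_ne_zero.mpr hk)]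
  have hred (a : ZMod (ℓ ^ k)) (ha : a ∈ S) :
      a * (a⁻¹ * r) = r ∧ red (a⁻¹ * r) = 0 ∧ red a = -1 := by
    have ha : red a = -1 := (mem_filter.mp ha).2
    have hu : IsUnit a := (ZMod.isUnit_iff_castHom_ne_zero hk a).mpr (by simp [red, ha])
    refine ⟨by rw [← mul_assoc, ZMod.mul_inv_of_unit a hu, one_mul], ?_, ha⟩
    rw [map_mul, map_intCast, hr, mul_zero]
  have hnotUnit (a b : ZMod (ℓ ^ k)) (ha : red a = -1) (hb : red b = 0) :
      ¬IsUnit (1 + a + b) := by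
    rw [ZMod.isUnit_iff_castHom_ne_zero hk, not_not, map_add, map_add, map_one, ha, hb]
    ring
  let f₁ (a : ZMod (ℓ ^ k)) := (a, a⁻¹ * (r : ZMod (ℓ ^ k)))
  let f₂ (a : ZMod (ℓ ^ k)) := (a⁻¹ * (r : ZMod (ℓ ^ k)), a)
  have hdisj : Disjoint (S.image f₁) (S.image f₂) := by
    simp only [disjoint_left, mem_image, not_exists, not_and]
    rintro _ ⟨a, ha, rfl⟩ b hb hba
    have := congrArg (red ·.2) hba
    simp only [f₁, f₂, (hred a ha).2.1, (hred b hb).2.2] at this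
    exact neg_ne_zero.mpr one_ne_zero this
  calc 2 * ℓ ^ (k - 1) = #(S.image f₁) + #(S.image f₂) := by
        rw [card_image_of_injective _ fun a b h => congrArg Prod.fst h,
          card_image_of_injective _ fun a b h => congrArg Prod.snd h, hS, two_mul]
    _ = #(S.image f₁ ∪ S.image f₂) := (card_union_of_disjoint hdisj).symm
    _ ≤ _ := by
        refine card_le_card (union_subset ?_ ?_) <;>
          rintro _ h <;> obtain ⟨a, ha, rfl⟩ := mem_image.mp h <;>
          obtain ⟨hmul, h0, h1⟩ := hred a ha <;> simp only [mem_filter, mem_univ, true_and]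
        · exact ⟨hmul, hnotUnit _ _ h1 h0⟩
        · refine ⟨by rw [mul_comm, hmul], ?_⟩
          rw [add_assoc, add_comm (_ * _), ← add_assoc]
          exact hnotUnit _ _ h1 h0

lemma card_traceUnitPairs_self_add_le (hk : k ≠ 0) {r : ℤ} (hr : (r : ZMod ℓ) = 0) :
    #(traceUnitPairs (ℓ ^ k) (ℓ ^ k) r) + (k + 2) * ℓ ^ (k - 1) ≤ (k + 1) * ℓ ^ k := by
  have hsplit := card_filter_add_card_filter_not
    (s := {x : ZMod (ℓ ^ k) × ZMod (ℓ ^ k) | x.1 * x.2 = r})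
    (fun x : ZMod (ℓ ^ k) × ZMod (ℓ ^ k) => IsUnit (1 + x.1 + x.2))
  simp only [filter_filter] at hsplit
  have hU : traceUnitPairs (ℓ ^ k) (ℓ ^ k) r =
      ({x | x.1 * x.2 = r ∧ IsUnit (1 + x.1 + x.2)} : Finset (ZMod (ℓ ^ k) × ZMod (ℓ ^ k))) := by
    refine filter_congr fun x _ => ?_
    rw [ZMod.self_dvd_val_iff, sub_eq_zero, and_comm]
  have := Nat.totient_prime_pow_add_pow_sub_one (ℓ := ℓ) hk
  have := two_mul_pow_le_card_mul_eq_and_not_isUnit hk hr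
  have := ZMod.card_filter_mul_eq_le (ℓ := ℓ) (k := k) r
  rw [hU]
  nlinarith

lemma card_traceUnitPairs_add_le {i : ℕ} (hi : i ≠ 0) (hik : i ≤ k) {r : ℤ}
    (hr : (r : ZMod ℓ) = 0) :
    #(traceUnitPairs (ℓ ^ k) (ℓ ^ i) r) + (i + 2) * ℓ ^ (2 * k - (i + 1))
      ≤ (i + 1) * ℓ ^ (2 * k - i) := by
  have hT := card_traceUnitPairs_mul (k := k) (pow_dvd_pow ℓ hik) (dvd_pow_self ℓ hi) r
  have hU := card_traceUnitPairs_self_add_le hi hr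
  set c := ℓ ^ (2 * (k - i))
  have hpow (a b : ℕ) (h : a = 2 * (k - i) + b) : ℓ ^ a = c * ℓ ^ b := by rw [h, pow_add]
  have hT' : #(traceUnitPairs (ℓ ^ k) (ℓ ^ i) r) = c * #(traceUnitPairs (ℓ ^ i) (ℓ ^ i) r) := by
    refine Nat.eq_of_mul_eq_mul_right (pow_pos (pow_pos hℓ.out.pos i) 2) ?_
    rw [hT, ← pow_mul, hpow (k * 2) (i * 2) (by omega), ← pow_mul]
    ring
  rw [hT', hpow (2 * k - (i + 1)) (i - 1) (by omega), hpow (2 * k - i) i (by omega)]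
  nlinarith [Nat.mul_le_mul_left c hU]

lemma card_traceUnitPairs_prime_add_three {r : ℤ} (hr : (r : ZMod ℓ) = 0) :
    #(traceUnitPairs ℓ ℓ r) + 3 = 2 * ℓ := by
  have hU : traceUnitPairs ℓ ℓ r =
      ({x | x.1 * x.2 = 0 ∧ IsUnit (1 + x.1 + x.2)} : Finset (ZMod ℓ × ZMod ℓ)) := by
    refine filter_congr fun x _ => ?_
    rw [ZMod.self_dvd_val_iff, hr, sub_zero, and_comm]
  have hsplit := card_filter_add_card_filter_not
    (s := {x : ZMod ℓ × ZMod ℓ | x.1 * x.2 = 0})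
    (fun x : ZMod ℓ × ZMod ℓ => IsUnit (1 + x.1 + x.2))
  simp only [filter_filter] at hsplit
  have hzero : #{x : ZMod ℓ × ZMod ℓ | x.1 * x.2 = 0} = φ ℓ + ℓ := by
    rw [ZMod.card_filter_mul_eq_sum_divisors, hℓ.out.divisors, sum_pair hℓ.out.one_lt.ne]
    simp [Nat.div_self hℓ.out.pos]
  have hbad : ({x | x.1 * x.2 = 0 ∧ ¬IsUnit (1 + x.1 + x.2)} : Finset (ZMod ℓ × ZMod ℓ))
      = {(0, -1), (-1, 0)} := by
    ext ⟨a, e⟩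
    simp only [mem_filter, mem_univ, true_and, mem_insert, mem_singleton, Prod.mk.injEq,
      isUnit_iff_ne_zero, not_not, mul_eq_zero]
    constructor
    · rintro ⟨rfl | rfl, h⟩
      · exact Or.inl ⟨rfl, by linear_combination h⟩
      · exact Or.inr ⟨by linear_combination h, rfl⟩
    · rintro (⟨rfl, rfl⟩ | ⟨rfl, rfl⟩) <;> simp
  rw [hbad, card_pair (by simp), hzero, Nat.totient_prime hℓ.out] at hsplit
  rw [hU]
  have := hℓ.out.two_le
  omega

lemma natCard_Cset_le (hk : k ≠ 0) {r : ℤ} (hr : (r : ZMod ℓ) = 0) :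
    Nat.card (Cset (ℓ ^ k) r) ≤ φ (ℓ ^ k) * (ℓ ^ k * (ℓ ^ k + ℓ ^ (k - 1))) := by
  have htel := sum_Ico_add_le_of_forall_add_le (f := fun i => (i + 1) * ℓ ^ (2 * k - i))
    (g := fun i => #(traceUnitPairs (ℓ ^ k) (ℓ ^ i) r)) (Nat.one_le_iff_ne_zero.mpr hk)
    fun i hi => card_traceUnitPairs_add_le (by grind) (mem_Ico.mp hi).2.le hr
  have hTk := card_traceUnitPairs_add_le hk le_rfl hr
  rw [natCard_Cset_eq_sum hk hr, sum_range_succ, sum_range_eq_add_Ico _ (by omega),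
    sum_congr rfl fun i hi => by rw [Nat.pow_mul_totient_pow_sub (mem_Ico.mp hi).2], ← mul_sum]
  simp only [pow_zero, one_mul, Nat.sub_self, Nat.sub_zero, Nat.totient_one, mul_one,
    card_traceUnitPairs_one]
  have e1 : ℓ ^ (2 * k - 1) = ℓ ^ k * ℓ ^ (k - 1) := by rw [← pow_add]; congr 1; omega
  have e2 : ℓ ^ (2 * k - k) = ℓ ^ k := by congr 1; omega
  have e3 : ℓ ^ (2 * k - (k + 1)) = ℓ ^ (k - 1) := by congr 1; omega
  rw [e1, e2] at htel
  rw [e2, e3] at hTk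
  have hφ := Nat.totient_prime_pow_add_pow_sub_one (ℓ := ℓ) hk
  have h3 : (k + 1) * ℓ ^ k * ℓ ^ k
      = (k + 1) * ℓ ^ k * φ (ℓ ^ k) + (k + 1) * ℓ ^ k * ℓ ^ (k - 1) := by
    rw [← mul_add, hφ]
  have h4 : φ (ℓ ^ k) * ℓ ^ k * ℓ ^ k
      = φ (ℓ ^ k) * ℓ ^ k * φ (ℓ ^ k) + φ (ℓ ^ k) * ℓ ^ k * ℓ ^ (k - 1) := by
    rw [← mul_add, hφ]
  nlinarith [Nat.mul_le_mul_left (φ (ℓ ^ k)) htel, Nat.mul_le_mul_left (ℓ ^ k) hTk,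
    Nat.zero_le (ℓ ^ k * ℓ ^ (k - 1))]

lemma le_natCard_Cset (hk : k ≠ 0) {r : ℤ} (hr : (r : ZMod ℓ) = 0) :
    φ (ℓ ^ k) * (ℓ ^ k * φ (ℓ ^ k) + ℓ ^ (2 * (k - 1)) * (2 * ℓ - 3))
      ≤ Nat.card (Cset (ℓ ^ k) r) := by
  have hT1 : #(traceUnitPairs (ℓ ^ k) ℓ r) = ℓ ^ (2 * (k - 1)) * (2 * ℓ - 3) := by
    have h := card_traceUnitPairs_mul (dvd_pow_self ℓ hk) dvd_rfl r
    have hpow : (ℓ ^ k) ^ 2 = ℓ ^ (2 * (k - 1)) * ℓ ^ 2 := by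
      rw [← pow_mul, ← pow_add]; congr 1; omega
    rw [← card_traceUnitPairs_prime_add_three hr, Nat.add_sub_cancel]
    exact Nat.eq_of_mul_eq_mul_right (pow_pos hℓ.out.pos 2) (by rw [h, hpow]; ring)
  rw [natCard_Cset_eq_sum hk hr]
  calc _ ≤ 1 * φ (ℓ ^ (k - 0)) * #(traceUnitPairs (ℓ ^ k) 1 r)
        + ℓ * φ (ℓ ^ (k - 1)) * #(traceUnitPairs (ℓ ^ k) ℓ r) := by
        rw [card_traceUnitPairs_one, hT1, Nat.sub_zero, one_mul, mul_add]
        gcongr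
        simpa using Nat.totient_pow_le_pow_mul_totient_pow_sub (ℓ := ℓ)
          (Nat.one_le_iff_ne_zero.mpr hk)
    _ ≤ _ := by
        have hsub : ({0, 1} : Finset ℕ) ⊆ range (k + 1) := by
          intro i hi
          simp only [mem_insert, mem_singleton] at hi
          rw [mem_range]
          omega
        simpa [sum_pair] using sum_le_sum_of_subset (f := fun i =>
          ℓ ^ i * φ (ℓ ^ (k - i)) * #(traceUnitPairs (ℓ ^ k) (ℓ ^ i) r)) hsub

lemma natCard_Cset_div_natCard_GL_le (hk : k ≠ 0) {r : ℤ} (hr : (r : ZMod ℓ) = 0) :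
    (Nat.card (Cset (ℓ ^ k) r) : ℝ) / Nat.card (GL (Fin 2) (ZMod (ℓ ^ k))) ≤ 1 / φ (ℓ ^ k) := by
  have hφ : (0 : ℝ) < φ (ℓ ^ k) := by simpa using pow_pos hℓ.out.pos k
  have hM : (0 : ℝ) < ℓ ^ k * (ℓ ^ k + ℓ ^ (k - 1)) := by
    have := hℓ.out.pos
    positivity
  have hC := (Nat.cast_le (α := ℝ)).mpr (natCard_Cset_le hk hr)
  rw [natCard_GL_fin_two_zmod_pow_eq hk, div_le_div_iff₀ (by push_cast; positivity) hφ]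
  push_cast at hC ⊢
  nlinarith

lemma le_natCard_Cset_div_natCard_GL (hk : k ≠ 0) {r : ℤ} (hr : (r : ZMod ℓ) = 0) :
    1 / (φ (ℓ ^ k) : ℝ) * ((ℓ - 2) / (ℓ - 1))
      ≤ (Nat.card (Cset (ℓ ^ k) r) : ℝ) / Nat.card (GL (Fin 2) (ZMod (ℓ ^ k))) := by
  have h2 : (2 : ℝ) ≤ ℓ := by exact_mod_cast hℓ.out.two_le
  have hC := (Nat.cast_le (α := ℝ)).mpr (le_natCard_Cset hk hr)
  have hφ : (φ (ℓ ^ k) : ℝ) = (ℓ - 1) * ℓ ^ (k - 1) := by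
    rw [Nat.totient_prime_pow hℓ.out (Nat.pos_of_ne_zero hk), Nat.cast_mul,
      Nat.cast_sub hℓ.out.one_le]
    push_cast
    ring
  have hpow : (ℓ : ℝ) ^ k = ℓ * ℓ ^ (k - 1) := by
    rw [← pow_succ', Nat.sub_add_cancel (Nat.one_le_iff_ne_zero.mpr hk)]
  rw [natCard_GL_fin_two_zmod_pow_eq hk]
  have hsq : (ℓ : ℝ) ^ (2 * (k - 1)) = (ℓ ^ (k - 1)) ^ 2 := by rw [← pow_mul, mul_comm]
  push_cast [Nat.cast_sub (by have := hℓ.out.two_le; omega : 3 ≤ 2 * ℓ)] at hC ⊢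
  rw [hφ, hpow, hsq] at hC
  rw [hφ, hpow]
  set L : ℝ := (ℓ : ℝ)
  set X : ℝ := L ^ (k - 1)
  have hL1 : 0 < L - 1 := by linarith
  have hX : 0 < X := pow_pos (by linarith) _
  have hb : 0 < (L - 1) * X * (L - 1) := by positivity
  rw [div_mul_div_comm, one_mul, div_le_div_iff₀ hb (by positivity)]
  have hgap : (L - 1) * X * (L * X * ((L - 1) * X) + X ^ 2 * (2 * L - 3)) * ((L - 1) * X * (L - 1))
      - (L - 2) * (((L - 1) * X) ^ 2 * (L * X * (L * X + X)))
      = (L - 1) ^ 2 * X ^ 4 * ((L - 1) ^ 2 + 2) := by ring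
  nlinarith [mul_le_mul_of_nonneg_right hC hb.le,
    (by positivity : (0 : ℝ) ≤ (L - 1) ^ 2 * X ^ 4 * ((L - 1) ^ 2 + 2))]

end PrimePower

/-- For a prime `ℓ`, `k ≥ 1` and an integer `r ≡ 0 (mod ℓ)`:
`(1/φ(ℓ^k))·(ℓ-2)/(ℓ-1) ≤ |C_r(ℓ^k)|/|GL₂(ℤ/ℓ^kℤ)| ≤ (1/φ(ℓ^k))·(1 + 1/((ℓ³-1)(ℓ²-1)))`. -/
theorem stmt8 (ℓ k : ℕ) (hℓ : ℓ.Prime) (hk : 1 ≤ k) (r : ℤ) (hr : (r : ZMod ℓ) = 0) :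
    (1 / (Nat.totient (ℓ ^ k) : ℝ)) * (((ℓ : ℝ) - 2) / ((ℓ : ℝ) - 1))
      ≤ (Nat.card (Cset (ℓ ^ k) r) : ℝ) / (Nat.card (GL (Fin 2) (ZMod (ℓ ^ k))) : ℝ) ∧
    (Nat.card (Cset (ℓ ^ k) r) : ℝ) / (Nat.card (GL (Fin 2) (ZMod (ℓ ^ k))) : ℝ)
      ≤ (1 / (Nat.totient (ℓ ^ k) : ℝ))
          * (1 + 1 / ((((ℓ : ℝ) ^ 3 - 1) * ((ℓ : ℝ) ^ 2 - 1)))) := by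
  have := Fact.mk hℓ
  have hk0 : k ≠ 0 := by omega
  refine ⟨le_natCard_Cset_div_natCard_GL hk0 hr, (natCard_Cset_div_natCard_GL_le hk0 hr).trans ?_⟩
  have h2 : (2 : ℝ) ≤ ℓ := by exact_mod_cast hℓ.two_le
  have hε : 0 ≤ 1 / (((ℓ : ℝ) ^ 3 - 1) * ((ℓ : ℝ) ^ 2 - 1)) := by
    have : (1 : ℝ) ≤ (ℓ : ℝ) ^ 2 := by nlinarith
    have : (1 : ℝ) ≤ (ℓ : ℝ) ^ 3 := by nlinarith
    exact div_nonneg zero_le_one (mul_nonneg (by linarith) (by linarith))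
  exact le_mul_of_one_le_right (by positivity) (le_add_of_nonneg_right hε)
end

section
/- Let p be a prime, let 1 ≤ e ≤ k be integers, let r be an integer, and let g ∈ GL₂(ℤ/p^eℤ) satisfy det(g) + 1 − tr(g) ≡ r (mod p^e) and be not congruent to the identity matrix modulo p. Then the number of matrices ĝ ∈ GL₂(ℤ/p^kℤ) that reduce to g modulo p^e and satisfy det(ĝ) + 1 − tr(ĝ) ≡ r (mod p^k) is exactly p^{3(k−e)}. -/
/-
Since `det M + 1 - tr M = det (1 - M)` for 2 × 2 matrices, we count lifts `Y'` of `Y = 1 - g`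
with `det Y' = r`, raising the exponent by one at a time. The lifts of `Y` from `ℤ/p^m` to
`ℤ/p^(m+1)` are `Y₀ + p^m B` with `B` over `𝔽_p`, and as `p^(2m) = 0` we have
`det (Y₀ + p^m B) = det Y₀ + p^m tr (adj Y₀ * B)`. Prescribing the determinant is therefore a
single affine condition `tr (D B) = w` over `𝔽_p`, where `D = adj (Y mod p) ≠ 0` because
`g ≢ 1 (mod p)`; it has `p^3` solutions. Matrix lifts of an invertible matrix are invertible,
as reduction `ℤ/p^k → ℤ/p^e` is a local homomorphism.
-/

theorem AddMonoidHom.card_fiber_mul_card_of_surjective {G H : Type*} [AddGroup G] [AddGroup H]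
    {f : G →+ H} (hf : Function.Surjective f) (c : H) :
    Nat.card {x // f x = c} * Nat.card H = Nat.card G := by
  change Nat.card (f ⁻¹' {c}) * _ = _
  rw [Nat.card_congr (f.fiberEquivKerOfSurjective hf c),
    ← Nat.card_congr (QuotientAddGroup.quotientKerEquivOfSurjective f hf).toEquiv, mul_comm,
    ← AddSubgroup.card_eq_card_quotient_mul_card_addSubgroup]

theorem Nat.card_eq_card_mul_of_card_fiber_eq {α β : Type*} [Finite α] [Finite β]
    (f : α → β) {n : ℕ} (h : ∀ b, Nat.card {a // f a = b} = n) :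
    Nat.card α = Nat.card β * n := by
  have := Fintype.ofFinite β
  rw [← Nat.card_congr (Equiv.sigmaFiberEquiv f), Nat.card_sigma,
    Finset.sum_congr rfl fun b _ => h b, Finset.sum_const, Finset.card_univ,
    Nat.card_eq_fintype_card, smul_eq_mul]

theorem Matrix.GeneralLinearGroup.card_lifts_eq {n R S : Type*} [Fintype n] [DecidableEq n]
    [CommRing R] [CommRing S] (f : R →+* S) [IsLocalHom f] (g : GL n S)
    (P : Matrix n n R → Prop) :
    Nat.card {g' : GL n R // map f g' = g ∧ P g'} =
      Nat.card {M : Matrix n n R // M.map f = g ∧ P M} :=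
  Nat.card_congr
    { toFun := fun g' => ⟨g'.1, congrArg Units.val g'.2.1, g'.2.2⟩
      invFun := fun M => ⟨mk'' M.1 (IsUnit.of_map f _ <| by
          rw [RingHom.map_det, RingHom.mapMatrix_apply, M.2.1]
          exact (det g).isUnit), Units.ext M.2.1, M.2.2⟩
      left_inv := fun _ => Subtype.ext (Units.ext rfl) }

namespace Matrix

section trace

variable {n K : Type*} [Fintype n] [DecidableEq n] [Field K]

theorem trace_mul_surjective {D : Matrix n n K} (hD : D ≠ 0) :
    Function.Surjective fun B => (D * B).trace := by
  obtain ⟨i, j, hij⟩ : ∃ i j, D i j ≠ 0 := by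
    by_contra! h
    exact hD (Matrix.ext h)
  intro c
  exact ⟨single j i ((D i j)⁻¹ * c), by simp [trace_mul_single, hij]⟩

theorem card_trace_mul_eq_mul_card {D : Matrix n n K} (hD : D ≠ 0) (c : K) :
    Nat.card {B : Matrix n n K // (D * B).trace = c} * Nat.card K = Nat.card (Matrix n n K) :=
  AddMonoidHom.card_fiber_mul_card_of_surjective
    (f := (traceAddMonoidHom n K).comp (AddMonoidHom.mulLeft D)) (trace_mul_surjective hD) c

end trace

theorem map_one_sub {n R S : Type*} [Fintype n] [DecidableEq n] [Ring R] [Ring S] (f : R →+* S)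
    (M : Matrix n n R) : (1 - M).map f = 1 - M.map f := by
  rw [← f.mapMatrix_apply, map_sub, map_one, f.mapMatrix_apply]

section finTwo

variable {R : Type*} [CommRing R]

theorem det_one_sub_fin_two_s9 (M : Matrix (Fin 2) (Fin 2) R) :
    (1 - M).det = M.det + 1 - M.trace := by
  simp [det_fin_two, trace_fin_two]
  ring

theorem det_add_smul_fin_two_of_mul_self_eq_zero (Y X : Matrix (Fin 2) (Fin 2) R) {c : R}
    (hc : c * c = 0) : (Y + c • X).det = Y.det + c * (Y.adjugate * X).trace := by
  simp [det_fin_two, adjugate_fin_two, trace_fin_two, vecMul, dotProduct, Fin.sum_univ_two]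
  linear_combination (X 0 0 * X 1 1 - X 0 1 * X 1 0) * hc

theorem adjugate_ne_zero_fin_two {A : Matrix (Fin 2) (Fin 2) R} (hA : A ≠ 0) :
    A.adjugate ≠ 0 := by
  intro h
  apply hA
  simpa [h] using (adjugate_adjugate' A).symm

end finTwo

end Matrix

namespace ZMod

theorem castHom_cast {m n : ℕ} [NeZero n] (h : m ∣ n) (a : ZMod m) :
    castHom h (ZMod m) (cast a : ZMod n) = a := by
  have : NeZero m := ⟨fun hm => NeZero.ne n (Nat.eq_zero_of_zero_dvd (hm ▸ h))⟩
  exact cast_cast_zmod_of_le (Nat.le_of_dvd (Nat.pos_of_neZero n) h) a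

variable {p : ℕ} [NeZero p]

theorem pow_mul_eq_pow_mul_iff (m : ℕ) (a b : ZMod (p ^ (m + 1))) :
    (p : ZMod (p ^ (m + 1))) ^ m * a = p ^ m * b ↔
      castHom (dvd_pow_self p m.succ_ne_zero) (ZMod p) a =
        castHom (dvd_pow_self p m.succ_ne_zero) (ZMod p) b := by
  rw [← sub_eq_zero, ← mul_sub, ← sub_eq_zero (a := castHom _ _ a), ← map_sub]
  generalize a - b = x
  rw [← natCast_zmod_val x, map_natCast, ← Nat.cast_pow, ← Nat.cast_mul,
    natCast_eq_zero_iff, natCast_eq_zero_iff]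
  generalize x.val = n
  rw [pow_succ, Nat.mul_dvd_mul_iff_left (pow_pos (Nat.pos_of_neZero p) m)]

theorem exists_eq_pow_mul_of_castHom_eq_zero {m : ℕ} {a : ZMod (p ^ (m + 1))}
    (h : castHom (pow_dvd_pow p m.le_succ) (ZMod (p ^ m)) a = 0) :
    ∃ x : ZMod (p ^ (m + 1)), a = p ^ m * x := by
  rw [← natCast_zmod_val a, map_natCast, natCast_eq_zero_iff] at h
  obtain ⟨x, hx⟩ := h
  exact ⟨x, by rw [← natCast_zmod_val a, hx, Nat.cast_mul, Nat.cast_pow]⟩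

theorem isLocalHom_castHom_pow_s9 {e k : ℕ} (he : e ≠ 0) (hek : e ≤ k) :
    IsLocalHom (castHom (pow_dvd_pow p hek) (ZMod (p ^ e))) := by
  refine ⟨fun a ha => ?_⟩
  rw [← natCast_zmod_val a, map_natCast, isUnit_iff_coprime,
    Nat.coprime_pow_right_iff (Nat.pos_of_ne_zero he)] at ha
  rwa [← natCast_zmod_val a, isUnit_iff_coprime,
    Nat.coprime_pow_right_iff (Nat.pos_of_ne_zero he |>.trans_le hek)]

end ZMod

namespace Matrix
open ZMod

variable {ι κ : Type*}

theorem map_castHom_map_castHom {l m n : ℕ} (hlm : l ∣ m) (hmn : m ∣ n)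
    (A : Matrix ι κ (ZMod n)) :
    (A.map (castHom hmn (ZMod m))).map (castHom hlm (ZMod l)) =
      A.map (castHom (hlm.trans hmn) (ZMod l)) := by
  rw [Matrix.map_map, ← RingHom.coe_comp, castHom_comp]

theorem map_castHom_map_cast {m n : ℕ} [NeZero n] (h : m ∣ n) (A : Matrix ι κ (ZMod m)) :
    (A.map (cast : ZMod m → ZMod n)).map (castHom h (ZMod m)) = A := by
  ext i j
  exact castHom_cast h (A i j)

variable {p : ℕ} [NeZero p] (m : ℕ)

theorem map_castHom_cast_add_pow_smul (Y : Matrix ι κ (ZMod (p ^ m)))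
    (X : Matrix ι κ (ZMod (p ^ (m + 1)))) :
    (Y.map cast + (p : ZMod (p ^ (m + 1))) ^ m • X).map
      (castHom (pow_dvd_pow p m.le_succ) (ZMod (p ^ m))) = Y := by
  have hp : (p : ZMod (p ^ m)) ^ m = 0 := by rw [← Nat.cast_pow, natCast_self]
  ext i j
  simp only [map_apply, add_apply, smul_apply, smul_eq_mul, map_add, map_mul, map_pow,
    map_natCast, hp, zero_mul, add_zero, castHom_cast]

theorem cast_add_pow_smul_injective (Y : Matrix ι κ (ZMod (p ^ m))) :
    Function.Injective fun B : Matrix ι κ (ZMod p) =>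
      Y.map cast + (p : ZMod (p ^ (m + 1))) ^ m •
        B.map (cast : ZMod p → ZMod (p ^ (m + 1))) := by
  intro B B' h
  ext i j
  have := congr_fun₂ h i j
  simpa [pow_mul_eq_pow_mul_iff, castHom_cast] using this

theorem exists_eq_cast_add_pow_smul {Y : Matrix ι κ (ZMod (p ^ m))}
    {Y' : Matrix ι κ (ZMod (p ^ (m + 1)))}
    (h : Y'.map (castHom (pow_dvd_pow p m.le_succ) (ZMod (p ^ m))) = Y) :
    ∃ B : Matrix ι κ (ZMod p),
      Y' = Y.map cast + (p : ZMod (p ^ (m + 1))) ^ m • B.map cast := by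
  have hker (i j) : castHom (pow_dvd_pow p m.le_succ) (ZMod (p ^ m))
      (Y' i j - cast (Y i j)) = 0 := by
    rw [map_sub, castHom_cast, ← h, map_apply, sub_self]
  choose x hx using fun i j => exists_eq_pow_mul_of_castHom_eq_zero (hker i j)
  refine ⟨of fun i j => castHom (dvd_pow_self p m.succ_ne_zero) (ZMod p) (x i j), ?_⟩
  ext i j
  rw [add_apply, smul_apply, map_apply, map_apply, of_apply, smul_eq_mul,
    (pow_mul_eq_pow_mul_iff m _ _).2 (castHom_cast _ _), ← hx, add_sub_cancel]

noncomputable def liftsEquiv (Y : Matrix ι κ (ZMod (p ^ m))) :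
    Matrix ι κ (ZMod p) ≃
      {Y' : Matrix ι κ (ZMod (p ^ (m + 1))) //
        Y'.map (castHom (pow_dvd_pow p m.le_succ) (ZMod (p ^ m))) = Y} :=
  Equiv.ofBijective (fun B => ⟨_, map_castHom_cast_add_pow_smul m Y (B.map cast)⟩)
    ⟨fun _ _ h => cast_add_pow_smul_injective m Y (congrArg Subtype.val h),
      fun Y' => (exists_eq_cast_add_pow_smul m Y'.2).imp fun _ hB => Subtype.ext hB.symm⟩

theorem coe_liftsEquiv (Y : Matrix ι κ (ZMod (p ^ m))) (B : Matrix ι κ (ZMod p)) :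
    (liftsEquiv m Y B : Matrix ι κ (ZMod (p ^ (m + 1)))) =
      Y.map cast + (p : ZMod (p ^ (m + 1))) ^ m • B.map cast :=
  rfl

end Matrix

open ZMod Matrix

section prime

variable {p : ℕ} [Fact p.Prime]

theorem card_lifts_det_eq_succ {m : ℕ} (hm : m ≠ 0) {Y : Matrix (Fin 2) (Fin 2) (ZMod (p ^ m))}
    (hY : Y.map (castHom (dvd_pow_self p hm) (ZMod p)) ≠ 0) {s : ZMod (p ^ (m + 1))}
    (hs : castHom (pow_dvd_pow p m.le_succ) (ZMod (p ^ m)) s = Y.det) :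
    Nat.card {Y' : Matrix (Fin 2) (Fin 2) (ZMod (p ^ (m + 1))) //
      Y'.map (castHom (pow_dvd_pow p m.le_succ) (ZMod (p ^ m))) = Y ∧ Y'.det = s} = p ^ 3 := by
  set π := castHom (pow_dvd_pow p m.le_succ) (ZMod (p ^ m))
  set ρ := castHom (dvd_pow_self p m.succ_ne_zero) (ZMod p)
  set Y₀ : Matrix (Fin 2) (Fin 2) (ZMod (p ^ (m + 1))) := Y.map cast
  have hπY₀ : Y₀.map π = Y := map_castHom_map_cast _ Y
  obtain ⟨w, hw⟩ : ∃ w, s - Y₀.det = p ^ m * w := exists_eq_pow_mul_of_castHom_eq_zero <| by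
    rw [map_sub, hs, RingHom.map_det, RingHom.mapMatrix_apply, hπY₀, sub_self]
  have hD : Y₀.adjugate.map ρ ≠ 0 := by
    have hρY₀ : Y₀.map ρ = Y.map (castHom (dvd_pow_self p hm) (ZMod p)) := by
      rw [← hπY₀]
      exact (map_castHom_map_castHom _ _ _).symm
    rw [← RingHom.mapMatrix_apply, RingHom.map_adjugate, RingHom.mapMatrix_apply, hρY₀]
    exact adjugate_ne_zero_fin_two hY
  have hsq : (p : ZMod (p ^ (m + 1))) ^ m * p ^ m = 0 := by
    rw [← pow_add, ← Nat.cast_pow, natCast_eq_zero_iff]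
    exact pow_dvd_pow p (by omega)
  have key (B : Matrix (Fin 2) (Fin 2) (ZMod p)) :
      (Y₀.adjugate.map ρ * B).trace = ρ w ↔
        (liftsEquiv m Y B : Matrix (Fin 2) (Fin 2) _).det = s := by
    rw [coe_liftsEquiv, det_add_smul_fin_two_of_mul_self_eq_zero _ _ hsq,
      ← eq_sub_iff_add_eq', hw, pow_mul_eq_pow_mul_iff, AddMonoidHom.map_trace ρ,
      Matrix.map_mul, map_castHom_map_cast]
  calc _ = Nat.card {B // (Y₀.adjugate.map ρ * B).trace = ρ w} := Nat.card_congr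
        (((liftsEquiv m Y).subtypeEquiv key).trans (Equiv.subtypeSubtypeEquivSubtypeInter _ _)).symm
    _ = p ^ 3 := by
      have h := card_trace_mul_eq_mul_card hD (ρ w)
      rw [Nat.card_zmod] at h
      refine Nat.eq_of_mul_eq_mul_right (Fact.out : p.Prime).pos (h.trans ?_)
      simp [Matrix, ← pow_mul, ← pow_succ]

variable (p) in
abbrev DetLifts {e : ℕ} (Y : Matrix (Fin 2) (Fin 2) (ZMod (p ^ e))) (s : ℤ) {k : ℕ}
    (hek : e ≤ k) : Type :=
  {Y' : Matrix (Fin 2) (Fin 2) (ZMod (p ^ k)) //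
    Y'.map (castHom (pow_dvd_pow p hek) (ZMod (p ^ e))) = Y ∧ Y'.det = s}

theorem card_detLifts {e : ℕ} (he : e ≠ 0) {Y : Matrix (Fin 2) (Fin 2) (ZMod (p ^ e))}
    (hY : Y.map (castHom (dvd_pow_self p he) (ZMod p)) ≠ 0) {s : ℤ} (hs : Y.det = s) {k : ℕ}
    (hek : e ≤ k) : Nat.card (DetLifts p Y s hek) = p ^ (3 * (k - e)) := by
  induction k, hek using Nat.le_induction with
  | base =>
    rw [Nat.sub_self, mul_zero, pow_zero, Nat.card_eq_one_iff_exists]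
    refine ⟨⟨Y, by simp, hs⟩, fun Y' => Subtype.ext ?_⟩
    simpa using Y'.2.1
  | succ k hek ih =>
    have hk : k ≠ 0 := by omega
    let π := castHom (pow_dvd_pow p k.le_succ) (ZMod (p ^ k))
    let reduce (Y' : DetLifts p Y s (hek.trans k.le_succ)) : DetLifts p Y s hek :=
      ⟨Y'.1.map π, by rw [map_castHom_map_castHom, Y'.2.1],
        by rw [← RingHom.mapMatrix_apply, ← RingHom.map_det, Y'.2.2, map_intCast]⟩
    rw [Nat.card_eq_card_mul_of_card_fiber_eq reduce (n := p ^ 3), ih, ← pow_add]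
    · congr 1
      omega
    intro N
    have hN : N.1.map (castHom (dvd_pow_self p hk) (ZMod p)) ≠ 0 := by
      rwa [← map_castHom_map_castHom (dvd_pow_self p he) (pow_dvd_pow p hek), N.2.1]
    have hsN : π s = N.1.det := by rw [map_intCast, N.2.2]
    rw [← card_lifts_det_eq_succ hk hN hsN]
    exact Nat.card_congr
      { toFun := fun Y' => ⟨Y'.1.1, congrArg Subtype.val Y'.2, Y'.1.2.2⟩
        invFun := fun Y' => ⟨⟨Y'.1, by
          rw [← map_castHom_map_castHom (pow_dvd_pow p hek) (pow_dvd_pow p k.le_succ), Y'.2.1,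
            N.2.1], Y'.2.2⟩, Subtype.ext Y'.2.1⟩ }

end prime

/-- Let `p` be prime, `1 ≤ e ≤ k`, `r ∈ ℤ`, and `g ∈ GL₂(ℤ/p^eℤ)` with
`det g + 1 - tr g ≡ r (mod p^e)` and `g` not congruent to the identity modulo `p`.
Then the number of lifts `g' ∈ GL₂(ℤ/p^kℤ)` of `g` with `det g' + 1 - tr g' ≡ r (mod p^k)`
is exactly `p^{3(k-e)}`. -/
theorem stmt9 (p e k : ℕ) (hp : p.Prime) (he : 1 ≤ e) (hek : e ≤ k) (r : ℤ)
    (g : GL (Fin 2) (ZMod (p ^ e)))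
    (hg : Matrix.det (g : Matrix (Fin 2) (Fin 2) (ZMod (p ^ e))) + 1
          - Matrix.trace (g : Matrix (Fin 2) (Fin 2) (ZMod (p ^ e))) = (r : ZMod (p ^ e)))
    (hgI : Matrix.GeneralLinearGroup.map
        (ZMod.castHom (dvd_pow_self p (Nat.one_le_iff_ne_zero.mp he)) (ZMod p)) g ≠ 1) :
    Nat.card {g' : GL (Fin 2) (ZMod (p ^ k)) //
        Matrix.GeneralLinearGroup.map (ZMod.castHom (pow_dvd_pow p hek) (ZMod (p ^ e))) g' = g ∧
        Matrix.det (g' : Matrix (Fin 2) (Fin 2) (ZMod (p ^ k))) + 1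
          - Matrix.trace (g' : Matrix (Fin 2) (Fin 2) (ZMod (p ^ k))) = (r : ZMod (p ^ k))}
      = p ^ (3 * (k - e)) := by
  have := Fact.mk hp
  have := isLocalHom_castHom_pow_s9 (p := p) (Nat.one_le_iff_ne_zero.mp he) hek
  set σ := castHom (dvd_pow_self p (Nat.one_le_iff_ne_zero.mp he)) (ZMod p)
  set τ := castHom (pow_dvd_pow p hek) (ZMod (p ^ e))
  have hY : (1 - (g : Matrix (Fin 2) (Fin 2) (ZMod (p ^ e)))).map σ ≠ 0 := by
    rw [map_one_sub, sub_ne_zero]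
    exact fun h => hgI (Units.ext h).symm
  rw [GeneralLinearGroup.card_lifts_eq τ g (fun M => M.det + 1 - M.trace = (r : ZMod (p ^ k))),
    ← card_detLifts (Nat.one_le_iff_ne_zero.mp he) hY (by rw [det_one_sub_fin_two_s9, hg]) hek]
  refine Nat.card_congr ((Equiv.subLeft 1).subtypeEquiv fun M => ?_)
  rw [Equiv.subLeft_apply, det_one_sub_fin_two_s9, map_one_sub, sub_right_inj]
end

section
/- Let p be a prime, let 1 ≤ e ≤ k be integers, and let r be an integer. Then the number of matrices ĝ ∈ GL₂(ℤ/p^kℤ) that are congruent to the identity matrix modulo p^e and satisfy det(ĝ) + 1 − tr(ĝ) ≡ r (mod p^k) is at most p^{3(k−e)}·p^{4e+1}. -/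
/-!
Put `A = g - 1`. Since `det g + 1 - tr g = det A` for `2 × 2` matrices, we count matrices `A`
with entries in `K = p^e ℤ/p^kℤ` and `det A = r`. If `N(t)` is the number of pairs in `K²` with
product `t`, there are `∑ₜ N(t) N(t - r) ≤ ∑ₜ N(t)²` of them (by `2xy ≤ x² + y²`), and `∑ₜ N(t)²`
is the multiplicative energy of `K`, the number of `(a, b, c, d) ∈ K⁴` with `ab = cd`.
If `2e ≤ k`, dividing by `p^e` bounds this energy by `p^{4e}` times the energy `E(m)` of `ℤ/p^mℤ`,
`m = k - 2e`; if `2e > k`, divide by `p^{⌊k/2⌋}` instead and use `E(m) ≤ p^{4m}` for `m ≤ 1`.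
Finally `E(m + 2) ≤ 4 p^{3(m+2)} + p⁴ E(m)`: a quadruple with a unit coordinate is determined by
its other three coordinates, and a quadruple of non-units is `p` times a solution modulo `p^m`.
Hence `E(m) ≤ p^{3m+4}`, and the count is at most `p^{3k-2e+4} ≤ p^{3k+e+1}` as `e ≥ 1`.
-/

open Finset Matrix
open scoped Combinatorics.Additive

lemma card_filter_sub_eq_eq_sum {α β : Type*} [Fintype β] [AddCommGroup β]
    [DecidableEq β] (s : Finset α) (f : α → β) (r : β) :
    #{x ∈ s ×ˢ s | f x.1 - f x.2 = r} = ∑ b, #{a ∈ s | f a = b} * #{a ∈ s | f a = b - r} := by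
  rw [card_eq_sum_card_fiberwise (f := fun x => f x.1) (t := univ) (fun _ _ => mem_univ _)]
  refine sum_congr rfl fun b _ => ?_
  rw [filter_filter, ← card_product]
  congr 1
  ext x
  simp only [mem_filter, mem_product]
  constructor
  · rintro ⟨⟨hx1, hx2⟩, hr, rfl⟩
    exact ⟨⟨hx1, rfl⟩, hx2, by rw [← hr, sub_sub_cancel]⟩
  · rintro ⟨⟨hx1, rfl⟩, hx2, h⟩
    exact ⟨⟨hx1, hx2⟩, by rw [h, sub_sub_cancel], rfl⟩

lemma card_filter_sub_eq_le {α β : Type*} [Fintype β] [AddCommGroup β]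
    [DecidableEq β] (s : Finset α) (f : α → β) (r : β) :
    #{x ∈ s ×ˢ s | f x.1 - f x.2 = r} ≤ #{x ∈ s ×ˢ s | f x.1 = f x.2} := by
  set N : β → ℕ := fun b => #{a ∈ s | f a = b}
  have hshift : ∑ b, N (b - r) ^ 2 = ∑ b, N b ^ 2 := (Equiv.subRight r).sum_comp (N · ^ 2)
  have h0 : #{x ∈ s ×ˢ s | f x.1 = f x.2} = ∑ b, N b ^ 2 := by
    simp_rw [← sub_eq_zero (a := f _), card_filter_sub_eq_eq_sum, sub_zero, sq, N]
  rw [card_filter_sub_eq_eq_sum, h0]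
  refine le_of_mul_le_mul_left (a := 2) ?_ two_pos
  calc 2 * ∑ b, N b * N (b - r) = ∑ b, 2 * N b * N (b - r) := by rw [mul_sum]; simp only [mul_assoc]
    _ ≤ ∑ b, (N b ^ 2 + N (b - r) ^ 2) := sum_le_sum fun b _ => two_mul_le_add_sq _ _
    _ = 2 * ∑ b, N b ^ 2 := by rw [sum_add_distrib, hshift, two_mul]

lemma card_filter_mul_sub_mul_eq_le_mulEnergy {R : Type*} [CommRing R] [Fintype R]
    [DecidableEq R] (s : Finset R) (r : R) :
    #{x ∈ (s ×ˢ s) ×ˢ (s ×ˢ s) | x.1.1 * x.1.2 - x.2.1 * x.2.2 = r} ≤ Eₘ[s] := by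
  rw [mulEnergy_eq_card_filter]
  exact card_filter_sub_eq_le (s ×ˢ s) (fun x => x.1 * x.2) r

lemma card_filter_mul_eq_mul_of_exists_isUnit_le {R : Type*} [CommRing R] [Fintype R]
    [DecidableEq R] :
    #{x : (R × R) × R × R | x.1.1 * x.2.1 = x.1.2 * x.2.2 ∧
      (IsUnit x.1.1 ∨ IsUnit x.1.2 ∨ IsUnit x.2.1 ∨ IsUnit x.2.2)} ≤ 4 * Fintype.card R ^ 3 := by
  set E : Finset ((R × R) × R × R) := {x | x.1.1 * x.2.1 = x.1.2 * x.2.2}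
  have hcard (P : (R × R) × R × R → Prop) [DecidablePred P] (g : (R × R) × R × R → R × R × R)
      (hg : Set.InjOn g {x | x ∈ E ∧ P x}) : #{x ∈ E | P x} ≤ Fintype.card R ^ 3 := by
    have := card_le_card_of_injOn g (s := {x ∈ E | P x}) (t := univ) (fun _ _ => mem_univ _)
      (by rwa [coe_filter])
    simpa [Fintype.card_prod, pow_three] using this
  have h₁ := hcard (fun x => IsUnit x.1.1) (fun x => (x.1.1, x.1.2, x.2.2)) <| by
    rintro ⟨⟨a₁, a₂⟩, b₁, b₂⟩ ⟨hx, ha⟩ ⟨⟨c₁, c₂⟩, d₁, d₂⟩ ⟨hy, -⟩ h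
    simp only [E, mem_filter, mem_univ, true_and, Prod.mk.injEq] at hx hy h ha ⊢
    obtain ⟨rfl, rfl, rfl⟩ := h
    simp [ha.mul_left_cancel (hx.trans hy.symm)]
  have h₂ := hcard (fun x => IsUnit x.1.2) (fun x => (x.1.1, x.1.2, x.2.1)) <| by
    rintro ⟨⟨a₁, a₂⟩, b₁, b₂⟩ ⟨hx, ha⟩ ⟨⟨c₁, c₂⟩, d₁, d₂⟩ ⟨hy, -⟩ h
    simp only [E, mem_filter, mem_univ, true_and, Prod.mk.injEq] at hx hy h ha ⊢
    obtain ⟨rfl, rfl, rfl⟩ := h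
    simp [ha.mul_left_cancel (hx.symm.trans hy)]
  have h₃ := hcard (fun x => IsUnit x.2.1) (fun x => (x.1.2, x.2.1, x.2.2)) <| by
    rintro ⟨⟨a₁, a₂⟩, b₁, b₂⟩ ⟨hx, ha⟩ ⟨⟨c₁, c₂⟩, d₁, d₂⟩ ⟨hy, -⟩ h
    simp only [E, mem_filter, mem_univ, true_and, Prod.mk.injEq] at hx hy h ha ⊢
    obtain ⟨rfl, rfl, rfl⟩ := h
    simp [ha.mul_right_cancel (hx.trans hy.symm)]
  have h₄ := hcard (fun x => IsUnit x.2.2) (fun x => (x.1.1, x.2.1, x.2.2)) <| by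
    rintro ⟨⟨a₁, a₂⟩, b₁, b₂⟩ ⟨hx, ha⟩ ⟨⟨c₁, c₂⟩, d₁, d₂⟩ ⟨hy, -⟩ h
    simp only [E, mem_filter, mem_univ, true_and, Prod.mk.injEq] at hx hy h ha ⊢
    obtain ⟨rfl, rfl, rfl⟩ := h
    simp [ha.mul_right_cancel (hx.symm.trans hy)]
  simp only [← filter_filter, filter_or, E] at h₁ h₂ h₃ h₄ ⊢
  grw [card_union_le, card_union_le, card_union_le, h₁, h₂, h₃, h₄]
  omega

lemma mulEnergy_univ_le_add_mulEnergy_nonunits {R : Type*} [CommRing R] [Fintype R]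
    [DecidableEq R] :
    Eₘ[(univ : Finset R)] ≤ 4 * Fintype.card R ^ 3 + Eₘ[{x : R | ¬IsUnit x}] := by
  grw [← card_filter_mul_eq_mul_of_exists_isUnit_le]
  rw [mulEnergy, mulEnergy, ← card_filter_add_card_filter_not
    (fun x => IsUnit x.1.1 ∨ IsUnit x.1.2 ∨ IsUnit x.2.1 ∨ IsUnit x.2.2)]
  refine Nat.add_le_add (by simp only [filter_filter, univ_product_univ]; exact le_rfl)
    (card_le_card ?_)
  intro x hx
  simp only [not_or, mem_filter, mem_product, mem_univ, true_and] at hx ⊢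
  tauto

def valMultiples (N d : ℕ) [NeZero N] : Finset (ZMod N) := {x | d ∣ x.val}

section PrimePower

variable {p : ℕ}

lemma filter_not_isUnit_subset_valMultiples [Fact p.Prime] (k : ℕ) :
    ({x | ¬IsUnit x} : Finset (ZMod (p ^ k))) ⊆ valMultiples (p ^ k) p := by
  intro x hx
  rw [mem_filter] at hx
  rw [valMultiples, mem_filter]
  refine ⟨mem_univ _, by_contra fun hpx => hx.2 ?_⟩
  rw [← ZMod.natCast_zmod_val x, ZMod.isUnit_iff_coprime]
  exact ((Nat.Prime.coprime_iff_not_dvd Fact.out).mpr hpx).symm.pow_right k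

lemma natCast_val_div_pow_mul_eq [NeZero p] {j m : ℕ}
    {a₁ a₂ b₁ b₂ : ZMod (p ^ (m + 2 * j))}
    (ha₁ : p ^ j ∣ a₁.val) (ha₂ : p ^ j ∣ a₂.val) (hb₁ : p ^ j ∣ b₁.val) (hb₂ : p ^ j ∣ b₂.val)
    (h : a₁ * b₁ = a₂ * b₂) :
    ((a₁.val / p ^ j : ℕ) : ZMod (p ^ m)) * (b₁.val / p ^ j : ℕ) =
      (a₂.val / p ^ j : ℕ) * (b₂.val / p ^ j : ℕ) := by
  have hval : a₁.val * b₁.val ≡ a₂.val * b₂.val [MOD p ^ (m + 2 * j)] := by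
    rw [← ZMod.natCast_eq_natCast_iff]
    push_cast [ZMod.natCast_zmod_val]
    exact h
  obtain ⟨c₁, hc₁⟩ := ha₁; obtain ⟨c₂, hc₂⟩ := ha₂
  obtain ⟨d₁, hd₁⟩ := hb₁; obtain ⟨d₂, hd₂⟩ := hb₂
  rw [hc₁, hc₂, hd₁, hd₂] at hval ⊢
  simp only [Nat.mul_div_cancel_left _ (Nat.pos_of_neZero _)]
  rw [← Nat.cast_mul, ← Nat.cast_mul, ZMod.natCast_eq_natCast_iff]
  have hsplit (c d : ℕ) : p ^ j * c * (p ^ j * d) = p ^ (2 * j) * (c * d) := by ring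
  rw [hsplit, hsplit, pow_add, mul_comm (p ^ m)] at hval
  exact Nat.ModEq.mul_left_cancel' (pow_ne_zero _ (NeZero.ne p)) hval

lemma mulEnergy_valMultiples_le [NeZero p] (j m : ℕ) :
    Eₘ[valMultiples (p ^ (m + 2 * j)) (p ^ j)] ≤
      p ^ (4 * j) * Eₘ[(univ : Finset (ZMod (p ^ m)))] := by
  set K := valMultiples (p ^ (m + 2 * j)) (p ^ j)
  set q : ZMod (p ^ (m + 2 * j)) → ℕ := fun x => x.val / p ^ j
  have hq_lt (x) : q x / p ^ m < p ^ j := by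
    rw [Nat.div_div_eq_div_mul, Nat.div_lt_iff_lt_mul (Nat.pos_of_neZero _)]
    exact (ZMod.val_lt x).trans_eq (by ring)
  have hq_inj : ∀ x ∈ K, ∀ y ∈ K, (q x : ZMod (p ^ m)) = q y → q x / p ^ m = q y / p ^ m →
      x = y := by
    intro x hx y hy hmod hdiv
    rw [ZMod.natCast_eq_natCast_iff'] at hmod
    have hq : q x = q y := by rw [← Nat.div_add_mod (q x), ← Nat.div_add_mod (q y), hmod, hdiv]
    simp only [K, valMultiples, mem_filter] at hx hy
    apply ZMod.val_injective
    rw [← Nat.div_mul_cancel hx.2, ← Nat.div_mul_cancel hy.2]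
    exact congrArg (· * p ^ j) hq
  let digit (x : ZMod (p ^ (m + 2 * j))) : Fin (p ^ j) := ⟨q x / p ^ m, hq_lt x⟩
  let φ (x : ZMod (p ^ (m + 2 * j))) : ZMod (p ^ m) := q x
  calc Eₘ[K]
      ≤ #(({x | x.1.1 * x.2.1 = x.1.2 * x.2.2} :
            Finset ((ZMod (p ^ m) × ZMod (p ^ m)) × ZMod (p ^ m) × ZMod (p ^ m))) ×ˢ
          (univ : Finset ((Fin (p ^ j) × Fin (p ^ j)) × Fin (p ^ j) × Fin (p ^ j)))) := by
        refine card_le_card_of_injOn (fun x : (ZMod (p ^ (m + 2 * j)) × ZMod (p ^ (m + 2 * j))) ×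
              ZMod (p ^ (m + 2 * j)) × ZMod (p ^ (m + 2 * j)) =>
          (((φ x.1.1, φ x.1.2), (φ x.2.1, φ x.2.2)),
            ((digit x.1.1, digit x.1.2), (digit x.2.1, digit x.2.2)))) ?_ ?_
        · rintro ⟨⟨a₁, a₂⟩, b₁, b₂⟩ hx
          simp only [K, valMultiples, coe_filter, mem_product, mem_filter, mem_univ, true_and,
            Set.mem_ofPred_eq] at hx
          rw [mem_coe, mem_product, mem_filter]
          exact ⟨⟨mem_univ _,
            natCast_val_div_pow_mul_eq hx.1.1.1 hx.1.1.2 hx.1.2.1 hx.1.2.2 hx.2⟩, mem_univ _⟩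
        · rintro ⟨⟨a₁, a₂⟩, b₁, b₂⟩ hx ⟨⟨c₁, c₂⟩, d₁, d₂⟩ hy h
          simp only [coe_filter, mem_product, Set.mem_ofPred_eq] at hx hy
          simp only [φ, digit, Prod.mk.injEq, Fin.mk.injEq] at h
          obtain ⟨⟨⟨h₁, h₂⟩, h₃, h₄⟩, ⟨h₁', h₂'⟩, h₃', h₄'⟩ := h
          rw [hq_inj _ hx.1.1.1 _ hy.1.1.1 h₁ h₁', hq_inj _ hx.1.1.2 _ hy.1.1.2 h₂ h₂',
            hq_inj _ hx.1.2.1 _ hy.1.2.1 h₃ h₃', hq_inj _ hx.1.2.2 _ hy.1.2.2 h₄ h₄']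
    _ = p ^ (4 * j) * Eₘ[(univ : Finset (ZMod (p ^ m)))] := by
        rw [card_product, card_univ, mulEnergy, univ_product_univ, univ_product_univ]
        simp only [Fintype.card_prod, Fintype.card_fin]
        ring

lemma mulEnergy_le_card_pow {α : Type*} [DecidableEq α] [Mul α] (s : Finset α) :
    Eₘ[s] ≤ #s ^ 4 :=
  (card_filter_le _ _).trans_eq <| by simp only [card_product]; ring

lemma mulEnergy_univ_zmod_le [Fact p.Prime] (m : ℕ) :
    Eₘ[(univ : Finset (ZMod (p ^ m)))] ≤ p ^ (3 * m + 4) := by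
  have hp : 2 ≤ p := (Fact.out : p.Prime).two_le
  induction m using Nat.strong_induction_on with
  | _ m ih =>
  match m with
  | 0 | 1 =>
    refine (mulEnergy_le_card_pow _).trans ?_
    rw [card_univ, ZMod.card, ← pow_mul]
    exact Nat.pow_le_pow_right (by omega) (by omega)
  | m + 2 =>
    have hp4 : 4 + p ^ 2 ≤ p ^ 4 := by nlinarith [pow_le_pow_left₀ (by omega : 0 ≤ 2) hp 2]
    calc Eₘ[(univ : Finset (ZMod (p ^ (m + 2))))]
        ≤ 4 * (p ^ (m + 2)) ^ 3 + Eₘ[{x : ZMod (p ^ (m + 2)) | ¬IsUnit x}] := by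
          simpa only [ZMod.card] using
            mulEnergy_univ_le_add_mulEnergy_nonunits (R := ZMod (p ^ (m + 2)))
      _ ≤ 4 * (p ^ (m + 2)) ^ 3 + Eₘ[valMultiples (p ^ (m + 2 * 1)) (p ^ 1)] := by
          have hsub := filter_not_isUnit_subset_valMultiples (p := p) (m + 2)
          rw [pow_one]
          exact Nat.add_le_add_left (mulEnergy_mono hsub hsub) _
      _ ≤ 4 * (p ^ (m + 2)) ^ 3 + p ^ 4 * p ^ (3 * m + 4) := by
          grw [mulEnergy_valMultiples_le, ih m (by omega)]
      _ ≤ p ^ (3 * (m + 2) + 4) := by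
          rw [show (p ^ (m + 2)) ^ 3 = p ^ (3 * m + 6) by ring,
            show p ^ 4 * p ^ (3 * m + 4) = p ^ 2 * p ^ (3 * m + 6) by ring,
            show p ^ (3 * (m + 2) + 4) = p ^ 4 * p ^ (3 * m + 6) by ring, ← add_mul]
          exact Nat.mul_le_mul_right _ hp4

lemma mulEnergy_valMultiples_pow_le [Fact p.Prime] {e k : ℕ} (he : 1 ≤ e) (hek : e ≤ k) :
    Eₘ[valMultiples (p ^ k) (p ^ e)] ≤ p ^ (3 * k + e + 1) := by
  have hp : 1 ≤ p := (Fact.out : p.Prime).one_le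
  obtain ⟨j, m, rfl, hje, hjm⟩ : ∃ j m, k = m + 2 * j ∧ j ≤ e ∧ (j = e ∨ m ≤ 1) :=
    ⟨min e (k / 2), k - 2 * min e (k / 2), by omega, by omega, by omega⟩
  have hsub : valMultiples (p ^ (m + 2 * j)) (p ^ e) ⊆ valMultiples (p ^ (m + 2 * j)) (p ^ j) :=
    fun x hx => by
      simp only [valMultiples, mem_filter] at hx ⊢
      exact ⟨hx.1, (pow_dvd_pow p hje).trans hx.2⟩
  calc Eₘ[valMultiples (p ^ (m + 2 * j)) (p ^ e)]
      ≤ p ^ (4 * j) * Eₘ[(univ : Finset (ZMod (p ^ m)))] :=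
        (mulEnergy_mono hsub hsub).trans (mulEnergy_valMultiples_le j m)
    _ ≤ p ^ (3 * (m + 2 * j) + e + 1) := by
      rcases hjm with rfl | hm
      · grw [mulEnergy_univ_zmod_le, ← pow_add]
        exact Nat.pow_le_pow_right hp (by omega)
      · grw [mulEnergy_le_card_pow, card_univ, ZMod.card, ← pow_mul, ← pow_add]
        exact Nat.pow_le_pow_right hp (by omega)

end PrimePower

lemma dvd_val_iff_castHom_eq_zero {N d : ℕ} [NeZero N] (h : d ∣ N) (x : ZMod N) :
    d ∣ x.val ↔ ZMod.castHom h (ZMod d) x = 0 := by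
  rw [ZMod.castHom_apply, ZMod.cast_eq_val, ZMod.natCast_eq_zero_iff]

lemma natCard_le_card_filter_mul_sub_mul {N d : ℕ} [NeZero N] (h : d ∣ N) (r : ZMod N) :
    Nat.card {g : GL (Fin 2) (ZMod N) //
        Matrix.GeneralLinearGroup.map (ZMod.castHom h (ZMod d)) g = 1 ∧
        Matrix.det (g : Matrix (Fin 2) (Fin 2) (ZMod N)) + 1
          - Matrix.trace (g : Matrix (Fin 2) (Fin 2) (ZMod N)) = r} ≤
      #{x ∈ (valMultiples N d ×ˢ valMultiples N d) ×ˢ (valMultiples N d ×ˢ valMultiples N d) |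
        x.1.1 * x.1.2 - x.2.1 * x.2.2 = r} := by
  have hmem {g : GL (Fin 2) (ZMod N)}
      (hg : Matrix.GeneralLinearGroup.map (ZMod.castHom h (ZMod d)) g = 1)
      (i j : Fin 2) : g.1 i j - (1 : Matrix (Fin 2) (Fin 2) (ZMod N)) i j ∈ valMultiples N d := by
    have := congrArg (fun g' : GL (Fin 2) (ZMod d) => g'.1 i j) hg
    simp only [GeneralLinearGroup.map_apply] at this
    rw [valMultiples, mem_filter, dvd_val_iff_castHom_eq_zero h, map_sub, this]
    simp [one_apply]
  rw [← Nat.card_eq_finsetCard]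
  refine Nat.card_le_card_of_injective (fun g =>
    ⟨((g.1.1 0 0 - 1, g.1.1 1 1 - 1), (g.1.1 0 1, g.1.1 1 0)), ?_⟩) ?_
  · obtain ⟨g, hg, hr⟩ := g
    simp only [mem_filter, mem_product]
    refine ⟨⟨⟨hmem hg 0 0, hmem hg 1 1⟩, ?_, ?_⟩, ?_⟩
    · simpa using hmem hg 0 1
    · simpa using hmem hg 1 0
    · rw [← hr, det_fin_two, trace_fin_two]
      ring
  · rintro ⟨g, hg⟩ ⟨g', hg'⟩ hgg'
    simp only [Subtype.mk.injEq, Prod.mk.injEq, sub_left_inj] at hgg'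
    obtain ⟨⟨h₀₀, h₁₁⟩, h₀₁, h₁₀⟩ := hgg'
    ext i j
    fin_cases i <;> fin_cases j <;> assumption

/-- Let `p` be prime, `1 ≤ e ≤ k`, `r ∈ ℤ`. The number of `g' ∈ GL₂(ℤ/p^kℤ)` congruent to
the identity modulo `p^e` and satisfying `det g' + 1 - tr g' ≡ r (mod p^k)` is at most
`p^{3(k-e)} · p^{4e+1}`. -/
theorem stmt11 (p e k : ℕ) (hp : p.Prime) (he : 1 ≤ e) (hek : e ≤ k) (r : ℤ) :
    Nat.card {g' : GL (Fin 2) (ZMod (p ^ k)) //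
        Matrix.GeneralLinearGroup.map (ZMod.castHom (pow_dvd_pow p hek) (ZMod (p ^ e))) g' = 1 ∧
        Matrix.det (g' : Matrix (Fin 2) (Fin 2) (ZMod (p ^ k))) + 1
          - Matrix.trace (g' : Matrix (Fin 2) (Fin 2) (ZMod (p ^ k))) = (r : ZMod (p ^ k))}
      ≤ p ^ (3 * (k - e)) * p ^ (4 * e + 1) := by
  have : Fact p.Prime := ⟨hp⟩
  calc _ ≤ _ := natCard_le_card_filter_mul_sub_mul (pow_dvd_pow p hek) _
    _ ≤ Eₘ[valMultiples (p ^ k) (p ^ e)] := card_filter_mul_sub_mul_eq_le_mulEnergy _ _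
    _ ≤ p ^ (3 * k + e + 1) := mulEnergy_valMultiples_pow_le he hek
    _ = p ^ (3 * (k - e)) * p ^ (4 * e + 1) := by rw [← pow_add]; congr 1; omega
end
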